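/- arXiv:1606.07602 — 2 statements merged into one kernel-verified Lean document; each statement's English description precedes it below -/
import Mathlib

section
/- Let A be a k × ℓ transformation matrix with k ≥ 2 and ℓ ≥ 2. Then there exists a unique copula C_A with [A](C_A) = C_A, and for every copula D the iterates [A]^r(D) converge to C_A in the modified Sobolev norm: ‖[A]^r(D) − C_A‖_S → 0 as r → ∞. -/
/-!
On a cell `(p_{i-1}, p_i) × (q_{j-1}, q_j)` the difference `[A]C − [A]D` of two patched copulas is
`a_{ij}` times a rescaled copy of `C − D`, and it vanishes off the open cells because `C − D`
vanishes on the boundary of the square. For `k ≥ 2` every entry of `A` is at most some `λ < 1`,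
so `|[A]^r C − [A]^r D| ≤ λ^r`: the iterates of the independence copula converge pointwise to a
copula `C_A`, which is the unique fixed point of `[A]`.

The same cell structure gives, for `v` in the `j`-th row,
`∫ (∂₁([A]C − [A]D))²(u, v) du = β_j ∫ (∂₁(C − D))²(x, G_j v) dx` with
`β_j = Σ_i a_{ij}² / Δp_i`, and similarly for `∂₂` with `γ_j = Σ_i a_{ij}² Δp_i / Δq_j²`. Since
`a_{ij} ≤ min(Δp_i, Δq_j)`, `Σ_j β_j Δq_j ≤ Σ_j Δq_j² < 1` (as `ℓ ≥ 2`) and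
`Σ_j γ_j Δq_j ≤ Σ_i Δp_i² < 1` (as `k ≥ 2`). Iterating these identities off a countable set of `v` and integrating in `v` bounds
both squared seminorms of `[A]^r D − C_A = [A]^r D − [A]^r C_A` by a geometric sequence.
-/

open Set

noncomputable section

/-- A (bivariate) copula, as a function `C : ℝ × ℝ → ℝ` whose defining properties are imposed
on the unit square `[0,1]²`: `C(u,0) = C(0,v) = 0`, `C(u,1) = u`, `C(1,v) = v`, and
2-increasingness. -/
def IsCopula (C : ℝ → ℝ → ℝ) : Prop :=
  (∀ u ∈ Icc (0:ℝ) 1, C u 0 = 0) ∧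
  (∀ v ∈ Icc (0:ℝ) 1, C 0 v = 0) ∧
  (∀ u ∈ Icc (0:ℝ) 1, C u 1 = u) ∧
  (∀ v ∈ Icc (0:ℝ) 1, C 1 v = v) ∧
  (∀ u₁ u₂ v₁ v₂ : ℝ, u₁ ∈ Icc (0:ℝ) 1 → u₂ ∈ Icc (0:ℝ) 1 → v₁ ∈ Icc (0:ℝ) 1 →
    v₂ ∈ Icc (0:ℝ) 1 → u₁ ≤ u₂ → v₁ ≤ v₂ →
    0 ≤ C u₂ v₂ - C u₂ v₁ - C u₁ v₂ + C u₁ v₁)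

/-- A `k × ℓ` transformation matrix: nonnegative entries summing to `1`, every row and every
column containing a nonzero entry.  (The index `i : Fin k` is the column index and
`j : Fin ℓ` is the row index.) -/
def IsTransfMatrix {k ℓ : ℕ} (a : Fin k → Fin ℓ → ℝ) : Prop :=
  (∀ i j, 0 ≤ a i j) ∧ (∑ i, ∑ j, a i j = 1) ∧
  (∀ j, ∃ i, a i j ≠ 0) ∧ (∀ i, ∃ j, a i j ≠ 0)

/-- `pP a m` is `p_m`: the sum of the entries in the first `m` columns of `a`. -/
def pP {k ℓ : ℕ} (a : Fin k → Fin ℓ → ℝ) (m : ℕ) : ℝ :=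
  ∑ i : Fin k, if (i : ℕ) < m then ∑ j, a i j else 0

/-- `qQ a m` is `q_m`: the sum of the entries in the first `m` rows of `a`. -/
def qQ {k ℓ : ℕ} (a : Fin k → Fin ℓ → ℝ) (m : ℕ) : ℝ :=
  ∑ j : Fin ℓ, if (j : ℕ) < m then ∑ i, a i j else 0

/-- `F_i(u) = min(1, (u − p_{i−1})/Δp_i) · 𝟙_{(p_{i−1},∞)}(u)`, the uniform distribution
function on `[p_{i−1}, p_i]` (here `i : Fin k` denotes the `(i+1)`-st column, so
`p_{i−1} = pP a i` and `p_i = pP a (i+1)`). -/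
def Fdist {k ℓ : ℕ} (a : Fin k → Fin ℓ → ℝ) (i : Fin k) (u : ℝ) : ℝ :=
  if pP a (i : ℕ) < u then min 1 ((u - pP a (i : ℕ)) / (pP a ((i : ℕ) + 1) - pP a (i : ℕ)))
  else 0

/-- `G_j(v) = min(1, (v − q_{j−1})/Δq_j) · 𝟙_{(q_{j−1},∞)}(v)`. -/
def Gdist {k ℓ : ℕ} (a : Fin k → Fin ℓ → ℝ) (j : Fin ℓ) (v : ℝ) : ℝ :=
  if qQ a (j : ℕ) < v then min 1 ((v - qQ a (j : ℕ)) / (qQ a ((j : ℕ) + 1) - qQ a (j : ℕ)))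
  else 0

/-- The patching operator `[A]`: `[A](C)(u,v) = Σ_i Σ_j a_{ij} C(F_i(u), G_j(v))`. -/
def patch {k ℓ : ℕ} (a : Fin k → Fin ℓ → ℝ) (C : ℝ → ℝ → ℝ) : ℝ → ℝ → ℝ :=
  fun u v => ∑ i, ∑ j, a i j * C (Fdist a i u) (Gdist a j v)

/-- First partial derivative `∂₁C` (defined via `deriv`, which agrees a.e. with the
almost-everywhere existing partial derivative of a copula). -/
def d1 (C : ℝ → ℝ → ℝ) (u v : ℝ) : ℝ := deriv (fun x => C x v) u

/-- Second partial derivative `∂₂C`. -/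
def d2 (C : ℝ → ℝ → ℝ) (u v : ℝ) : ℝ := deriv (fun y => C u y) v

/-- `‖C‖₁² = ∫₀¹∫₀¹ |∂₁C(u,v)|² du dv`. -/
def sobSq1 (C : ℝ → ℝ → ℝ) : ℝ := ∫ v in (0:ℝ)..1, ∫ u in (0:ℝ)..1, (d1 C u v) ^ 2

/-- `‖C‖₂² = ∫₀¹∫₀¹ |∂₂C(u,v)|² du dv`. -/
def sobSq2 (C : ℝ → ℝ → ℝ) : ℝ := ∫ v in (0:ℝ)..1, ∫ u in (0:ℝ)..1, (d2 C u v) ^ 2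

/-- The modified Sobolev norm `‖C‖_S = (‖C‖₁² + ‖C‖₂²)^{1/2}`. -/
def sobNorm (C : ℝ → ℝ → ℝ) : ℝ := Real.sqrt (sobSq1 C + sobSq2 C)

/-- Pointwise difference of two bivariate functions. -/
def csub (C D : ℝ → ℝ → ℝ) : ℝ → ℝ → ℝ := fun u v => C u v - D u v

/-- The `*`-product of copulas: `(C*D)(u,v) = ∫₀¹ ∂₂C(u,t) ∂₁D(t,v) dt`. -/
def cstar (C D : ℝ → ℝ → ℝ) : ℝ → ℝ → ℝ :=
  fun u v => ∫ t in (0:ℝ)..1, d2 C u t * d1 D t v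

/-- Transpose of a copula: `C^t(u,v) = C(v,u)`. -/
def ctransp (C : ℝ → ℝ → ℝ) : ℝ → ℝ → ℝ := fun u v => C v u

/-- `C` is left invertible: `C^t * C = M` on `[0,1]²`, where `M(u,v) = min(u,v)`. -/
def LeftInvertibleC (C : ℝ → ℝ → ℝ) : Prop :=
  ∀ u ∈ Icc (0:ℝ) 1, ∀ v ∈ Icc (0:ℝ) 1, cstar (ctransp C) C u v = min u v

/-- `C` is right invertible: `C * C^t = M` on `[0,1]²`. -/
def RightInvertibleC (C : ℝ → ℝ → ℝ) : Prop :=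
  ∀ u ∈ Icc (0:ℝ) 1, ∀ v ∈ Icc (0:ℝ) 1, cstar C (ctransp C) u v = min u v

open Filter MeasureTheory Topology

lemma lt_one_of_sum_eq_one {ι : Type*} [Fintype ι] [Nontrivial ι] {x : ι → ℝ}
    (hx : ∀ i, 0 < x i) (hsum : ∑ i, x i = 1) (i : ι) : x i < 1 := by
  obtain ⟨j, hji⟩ := exists_ne i
  have := Finset.add_le_sum (fun i _ => (hx i).le) (Finset.mem_univ i) (Finset.mem_univ j)
    hji.symm
  linarith [hx j]

lemma sum_sq_lt_one {ι : Type*} [Fintype ι] [Nontrivial ι] {x : ι → ℝ}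
    (hx : ∀ i, 0 < x i) (hsum : ∑ i, x i = 1) : ∑ i, x i ^ 2 < 1 := by
  calc ∑ i, x i ^ 2 < ∑ i, x i := Finset.sum_lt_sum_of_nonempty Finset.univ_nonempty
        fun i _ => by nlinarith [hx i, lt_one_of_sum_eq_one hx hsum i]
    _ = 1 := hsum

lemma intervalIntegrable_of_abs_le {f : ℝ → ℝ} {A B M : ℝ} (hAB : A ≤ B)
    (hf : AEStronglyMeasurable f (volume.restrict (Ioo A B)))
    (hM : ∀ x ∈ Ioo A B, |f x| ≤ M) : IntervalIntegrable f volume A B := by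
  rw [intervalIntegrable_iff_integrableOn_Ioo_of_le hAB]
  refine Integrable.mono' (g := fun _ => M) (integrableOn_const measure_Ioo_lt_top.ne) hf ?_
  exact (ae_restrict_iff' measurableSet_Ioo).2 (ae_of_all _ hM)

lemma intervalIntegral.integral_le_of_le_off_countable {f g : ℝ → ℝ} {S : Set ℝ}
    (hS : S.Countable) (hg : IntervalIntegrable g volume 0 1) (hg₀ : 0 ≤ ∫ x in (0:ℝ)..1, g x)
    (hfg : ∀ x ∈ Ioo (0:ℝ) 1, x ∉ S → f x ≤ g x) :
    ∫ x in (0:ℝ)..1, f x ≤ ∫ x in (0:ℝ)..1, g x := by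
  by_cases hf : IntervalIntegrable f volume 0 1
  · refine intervalIntegral.integral_mono_ae_restrict zero_le_one hf hg ?_
    have hnull : ∀ᵐ x ∂volume.restrict (Icc (0:ℝ) 1), x ∉ S ∪ {0, 1} :=
      ae_restrict_of_ae ((hS.union (Set.toFinite _).countable).ae_notMem _)
    filter_upwards [hnull, ae_restrict_mem measurableSet_Icc] with x hxS hx
    simp only [mem_union, mem_insert_iff, mem_singleton_iff, not_or] at hxS
    exact hfg x ⟨hx.1.lt_of_ne (Ne.symm hxS.2.1), hx.2.lt_of_ne hxS.2.2⟩ hxS.1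
  · rwa [intervalIntegral.integral_undef hf]

section TransfMatrix

variable {k ℓ : ℕ} {a : Fin k → Fin ℓ → ℝ}

lemma pP_zero : pP a 0 = 0 := by simp [pP]

lemma pP_succ_sub (i : Fin k) : pP a (i + 1) - pP a i = ∑ j, a i j := by
  simp only [pP, ← Finset.sum_sub_distrib]
  rw [Finset.sum_eq_single i (fun i' _ hi' => by
    have : (i' : ℕ) ≠ i := Fin.val_ne_of_ne hi'
    split_ifs <;> first | omega | simp) (by simp)]
  simp

lemma qQ_succ_sub (j : Fin ℓ) : qQ a (j + 1) - qQ a j = ∑ i, a i j := pP_succ_sub j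

namespace IsTransfMatrix

lemma transpose (ha : IsTransfMatrix a) : IsTransfMatrix (fun j i => a i j) :=
  ⟨fun j i => ha.1 i j, by rw [Finset.sum_comm]; exact ha.2.1, ha.2.2.2, ha.2.2.1⟩

lemma sum_row_pos (ha : IsTransfMatrix a) (i : Fin k) : 0 < ∑ j, a i j := by
  obtain ⟨j, hj⟩ := ha.2.2.2 i
  exact Finset.sum_pos' (fun j _ => ha.1 i j) ⟨j, Finset.mem_univ j, (ha.1 i j).lt_of_ne' hj⟩

lemma pP_mono (ha : IsTransfMatrix a) : Monotone (pP a) := fun m m' h =>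
  Finset.sum_le_sum fun i _ => by
    split_ifs <;> first | rfl | exact Finset.sum_nonneg fun j _ => ha.1 i j | omega

lemma pP_nonneg (ha : IsTransfMatrix a) (m : ℕ) : 0 ≤ pP a m :=
  pP_zero (a := a) ▸ ha.pP_mono (Nat.zero_le m)

lemma pP_eq_one (ha : IsTransfMatrix a) {m : ℕ} (hm : k ≤ m) : pP a m = 1 :=
  ha.2.1 ▸ Finset.sum_congr rfl fun i _ => if_pos (i.isLt.trans_le hm)

lemma pP_le_one (ha : IsTransfMatrix a) (m : ℕ) : pP a m ≤ 1 :=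
  (ha.pP_mono (le_max_left m k)).trans_eq (ha.pP_eq_one (le_max_right m k))

lemma pP_succ_sub_pos (ha : IsTransfMatrix a) (i : Fin k) : 0 < pP a (i + 1) - pP a i :=
  (pP_succ_sub i).symm ▸ ha.sum_row_pos i

lemma pP_lt_succ (ha : IsTransfMatrix a) (i : Fin k) : pP a i < pP a (i + 1) :=
  sub_pos.1 (ha.pP_succ_sub_pos i)

lemma sum_pP_succ_sub (ha : IsTransfMatrix a) : ∑ i : Fin k, (pP a (i + 1) - pP a i) = 1 := by
  simp only [pP_succ_sub, ha.2.1]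

lemma le_pP_succ_sub (ha : IsTransfMatrix a) (i : Fin k) (j : Fin ℓ) :
    a i j ≤ pP a (i + 1) - pP a i :=
  pP_succ_sub i ▸ Finset.single_le_sum (fun j _ => ha.1 i j) (Finset.mem_univ j)

lemma le_qQ_succ_sub (ha : IsTransfMatrix a) (i : Fin k) (j : Fin ℓ) :
    a i j ≤ qQ a (j + 1) - qQ a j :=
  ha.transpose.le_pP_succ_sub j i

lemma sum_mul_qQ_succ_sub_nonneg (ha : IsTransfMatrix a) {β : Fin ℓ → ℝ} (hβ₀ : ∀ j, 0 ≤ β j) :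
    0 ≤ ∑ j, β j * (qQ a (j + 1) - qQ a j) :=
  Finset.sum_nonneg fun j _ => mul_nonneg (hβ₀ j) (ha.transpose.pP_succ_sub_pos j).le

lemma pP_succ_sub_le_one (ha : IsTransfMatrix a) (i : Fin k) : pP a (i + 1) - pP a i ≤ 1 := by
  linarith [ha.pP_nonneg i, ha.pP_le_one (i + 1)]

end IsTransfMatrix

end TransfMatrix

section Fdist

variable {k ℓ : ℕ} {a : Fin k → Fin ℓ → ℝ} {i : Fin k} {u : ℝ}

lemma Fdist_of_le (hu : u ≤ pP a i) : Fdist a i u = 0 := if_neg hu.not_gt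

lemma Fdist_of_mem_Ioo (hu : u ∈ Ioo (pP a i) (pP a (i + 1))) :
    Fdist a i u = (u - pP a i) / (pP a (i + 1) - pP a i) :=
  (if_pos hu.1).trans <| min_eq_right <|
    (div_le_one (by linarith [hu.1, hu.2])).2 (by linarith [hu.2])

lemma Fdist_mem_Ioo (hu : u ∈ Ioo (pP a i) (pP a (i + 1))) : Fdist a i u ∈ Ioo (0:ℝ) 1 := by
  have hΔ : 0 < pP a (i + 1) - pP a i := by linarith [hu.1, hu.2]
  rw [Fdist_of_mem_Ioo hu, mem_Ioo, div_pos_iff_of_pos_right hΔ, div_lt_one hΔ]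
  constructor <;> linarith [hu.1, hu.2]

lemma Gdist_of_mem_Ioo {j : Fin ℓ} {v : ℝ} (hv : v ∈ Ioo (qQ a j) (qQ a (j + 1))) :
    Gdist a j v = (v - qQ a j) / (qQ a (j + 1) - qQ a j) :=
  Fdist_of_mem_Ioo hv

lemma Gdist_mem_Ioo {j : Fin ℓ} {v : ℝ} (hv : v ∈ Ioo (qQ a j) (qQ a (j + 1))) :
    Gdist a j v ∈ Ioo (0:ℝ) 1 :=
  Fdist_mem_Ioo hv

namespace IsTransfMatrix

lemma Fdist_of_ge (ha : IsTransfMatrix a) (hu : pP a (i + 1) ≤ u) : Fdist a i u = 1 := by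
  have := ha.pP_lt_succ i
  refine (if_pos (by linarith)).trans (min_eq_left ?_)
  rw [one_le_div (by linarith)]
  linarith

lemma Fdist_trichotomy (ha : IsTransfMatrix a) (i : Fin k) (u : ℝ) :
    Fdist a i u = 0 ∧ u ≤ pP a i ∨ u ∈ Ioo (pP a i) (pP a (i + 1)) ∨
      Fdist a i u = 1 ∧ pP a (i + 1) ≤ u := by
  rcases le_or_gt u (pP a i) with h₁ | h₁
  · exact Or.inl ⟨Fdist_of_le h₁, h₁⟩
  rcases lt_or_ge u (pP a (i + 1)) with h₂ | h₂
  · exact Or.inr (Or.inl ⟨h₁, h₂⟩)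
  · exact Or.inr (Or.inr ⟨ha.Fdist_of_ge h₂, h₂⟩)

lemma Fdist_mem_Icc (ha : IsTransfMatrix a) (i : Fin k) (u : ℝ) : Fdist a i u ∈ Icc (0:ℝ) 1 := by
  rcases ha.Fdist_trichotomy i u with ⟨h, -⟩ | h | ⟨h, -⟩
  · simp [h]
  · exact Ioo_subset_Icc_self (Fdist_mem_Ioo h)
  · simp [h]

lemma Fdist_eq_zero_or_one (ha : IsTransfMatrix a) (hu : u ∉ Ioo (pP a i) (pP a (i + 1))) :
    Fdist a i u = 0 ∨ Fdist a i u = 1 := by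
  rcases ha.Fdist_trichotomy i u with ⟨h, -⟩ | h | ⟨h, -⟩
  exacts [Or.inl h, absurd h hu, Or.inr h]

lemma Fdist_mono (ha : IsTransfMatrix a) (i : Fin k) : Monotone (Fdist a i) := by
  have hΔ := ha.pP_succ_sub_pos i
  intro x y hxy
  unfold Fdist
  split_ifs with hx hy hy
  · gcongr
  · exact absurd (hx.trans_le hxy) hy
  · exact le_min zero_le_one (div_nonneg (by linarith) hΔ.le)
  · rfl

lemma notMem_Ioo_pP_of_ne (ha : IsTransfMatrix a) (hu : u ∈ Ioo (pP a i) (pP a (i + 1)))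
    {i' : Fin k} (hi : i' ≠ i) :
    u ∉ Ioo (pP a i') (pP a (i' + 1)) := fun hu' => by
  rcases Fin.lt_or_lt_of_ne hi with h | h
  · linarith [hu.1, hu'.2, ha.pP_mono (Nat.succ_le_of_lt h)]
  · linarith [hu.2, hu'.1, ha.pP_mono (Nat.succ_le_of_lt h)]

lemma sum_mul_Fdist (ha : IsTransfMatrix a) {u : ℝ} (hu : u ∈ Icc (0:ℝ) 1) :
    ∑ i : Fin k, (∑ j, a i j) * Fdist a i u = u := by
  have key (i : Fin k) : (∑ j, a i j) * Fdist a i u = min u (pP a (i + 1)) - min u (pP a i) := by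
    have := ha.pP_lt_succ i
    rw [← pP_succ_sub]
    rcases ha.Fdist_trichotomy i u with ⟨h, hu⟩ | h | ⟨h, hu⟩
    · rw [h, min_eq_left hu, min_eq_left (by linarith)]; ring
    · rw [Fdist_of_mem_Ioo h, min_eq_left h.2.le, min_eq_right h.1.le,
        mul_div_cancel₀ _ (by linarith)]
    · rw [h, min_eq_right hu, min_eq_right (by linarith)]; ring
  rw [Finset.sum_congr rfl fun i _ => key i,
    Fin.sum_univ_eq_sum_range (fun m => min u (pP a (m + 1)) - min u (pP a m)),
    Finset.sum_range_sub (fun m => min u (pP a m)), pP_zero, ha.pP_eq_one le_rfl,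
    min_eq_left hu.2, min_eq_right hu.1, sub_zero]

lemma Ioo_pP_subset (ha : IsTransfMatrix a) (i : Fin k) :
    Ioo (pP a i) (pP a (i + 1)) ⊆ Ioo (0:ℝ) 1 :=
  Ioo_subset_Ioo (ha.pP_nonneg i) (ha.pP_le_one _)

lemma exists_mem_Ioo_pP (ha : IsTransfMatrix a) {u : ℝ} (hu : u ∈ Ioo (0:ℝ) 1)
    (hne : ∀ m, u ≠ pP a m) : ∃ i : Fin k, u ∈ Ioo (pP a i) (pP a (i + 1)) := by
  by_contra! h
  have hlt (m : ℕ) (hm : m ≤ k) : pP a m < u := by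
    induction m with
    | zero => rw [pP_zero]; exact hu.1
    | succ m ih =>
      have := ih (by omega)
      exact (not_lt.1 fun h' => h ⟨m, by omega⟩ ⟨this, h'⟩).lt_of_ne' (hne _)
  linarith [hlt k le_rfl, ha.pP_eq_one le_rfl, hu.2]

lemma qQ_nonneg (ha : IsTransfMatrix a) (m : ℕ) : 0 ≤ qQ a m := ha.transpose.pP_nonneg m

lemma qQ_le_one (ha : IsTransfMatrix a) (m : ℕ) : qQ a m ≤ 1 := ha.transpose.pP_le_one m

lemma qQ_succ_sub_pos (ha : IsTransfMatrix a) (j : Fin ℓ) : 0 < qQ a (j + 1) - qQ a j :=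
  ha.transpose.pP_succ_sub_pos j

lemma Gdist_mem_Icc (ha : IsTransfMatrix a) (j : Fin ℓ) (v : ℝ) : Gdist a j v ∈ Icc (0:ℝ) 1 :=
  ha.transpose.Fdist_mem_Icc j v

lemma Gdist_mono (ha : IsTransfMatrix a) (j : Fin ℓ) : Monotone (Gdist a j) :=
  ha.transpose.Fdist_mono j

lemma Gdist_eq_zero_or_one (ha : IsTransfMatrix a) {j : Fin ℓ} {v : ℝ}
    (hv : v ∉ Ioo (qQ a j) (qQ a (j + 1))) : Gdist a j v = 0 ∨ Gdist a j v = 1 :=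
  ha.transpose.Fdist_eq_zero_or_one hv

lemma notMem_Ioo_qQ_of_ne (ha : IsTransfMatrix a) {j : Fin ℓ} {v : ℝ}
    (hv : v ∈ Ioo (qQ a j) (qQ a (j + 1))) {j' : Fin ℓ} (hj : j' ≠ j) :
    v ∉ Ioo (qQ a j') (qQ a (j' + 1)) :=
  ha.transpose.notMem_Ioo_pP_of_ne hv hj

lemma Ioo_qQ_subset (ha : IsTransfMatrix a) (j : Fin ℓ) :
    Ioo (qQ a j) (qQ a (j + 1)) ⊆ Ioo (0:ℝ) 1 :=
  ha.transpose.Ioo_pP_subset j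

lemma exists_mem_Ioo_qQ (ha : IsTransfMatrix a) {v : ℝ} (hv : v ∈ Ioo (0:ℝ) 1)
    (hne : ∀ m, v ≠ qQ a m) : ∃ j : Fin ℓ, v ∈ Ioo (qQ a j) (qQ a (j + 1)) :=
  ha.transpose.exists_mem_Ioo_pP hv hne

end IsTransfMatrix

end Fdist

def ZeroOnBoundary (E : ℝ → ℝ → ℝ) : Prop :=
  ∀ x ∈ Icc (0:ℝ) 1, ∀ y ∈ Icc (0:ℝ) 1, (x = 0 ∨ x = 1) ∨ (y = 0 ∨ y = 1) → E x y = 0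

lemma ZeroOnBoundary.ctransp {E : ℝ → ℝ → ℝ} (hE : ZeroOnBoundary E) :
    ZeroOnBoundary (ctransp E) := fun x hx y hy h => hE y hy x hx h.symm

namespace IsCopula

variable {C D : ℝ → ℝ → ℝ}

lemma ctransp (hC : IsCopula C) : IsCopula (ctransp C) :=
  ⟨hC.2.1, hC.1, hC.2.2.2.1, hC.2.2.1, fun u₁ u₂ v₁ v₂ hu₁ hu₂ hv₁ hv₂ hu hv => by
    have := hC.2.2.2.2 v₁ v₂ u₁ u₂ hv₁ hv₂ hu₁ hu₂ hv hu
    simp only [_root_.ctransp]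
    linarith⟩

lemma mem_Icc (hC : IsCopula C) {u v : ℝ} (hu : u ∈ Icc (0:ℝ) 1) (hv : v ∈ Icc (0:ℝ) 1) :
    C u v ∈ Icc (0:ℝ) 1 := by
  have h₀ := hC.2.2.2.2 0 u 0 v (by simp) hu (by simp) hv hu.1 hv.1
  have h₁ := hC.2.2.2.2 0 u v 1 (by simp) hu hv (by simp) hu.1 hv.2
  constructor <;> linarith [hC.1 0 (by simp), hC.2.1 1 (by simp), hC.1 u hu, hC.2.1 v hv,
    hC.2.2.1 u hu, hu.2]

lemma lipschitzOnWith_fst (hC : IsCopula C) {v : ℝ} (hv : v ∈ Icc (0:ℝ) 1) :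
    LipschitzOnWith 1 (fun x => C x v) (Icc 0 1) := by
  have key {x y : ℝ} (hx : x ∈ Icc (0:ℝ) 1) (hy : y ∈ Icc (0:ℝ) 1) (hxy : x ≤ y) :
      |C x v - C y v| ≤ |x - y| := by
    have h₀ := hC.2.2.2.2 x y 0 v hx hy (by simp) hv hxy hv.1
    have h₁ := hC.2.2.2.2 x y v 1 hx hy hv (by simp) hxy hv.2
    rw [abs_sub_comm, abs_of_nonneg (by linarith [hC.1 x hx, hC.1 y hy]),
      abs_sub_comm, abs_of_nonneg (by linarith)]
    linarith [hC.2.2.1 x hx, hC.2.2.1 y hy]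
  refine LipschitzOnWith.of_dist_le_mul fun x hx y hy => ?_
  simp only [Real.dist_eq, NNReal.coe_one, one_mul]
  rcases le_total x y with hxy | hxy
  · exact key hx hy hxy
  · rw [abs_sub_comm, abs_sub_comm x]
    exact key hy hx hxy

lemma lipschitzOnWith_snd (hC : IsCopula C) {u : ℝ} (hu : u ∈ Icc (0:ℝ) 1) :
    LipschitzOnWith 1 (fun y => C u y) (Icc 0 1) :=
  hC.ctransp.lipschitzOnWith_fst hu

lemma continuousOn (hC : IsCopula C) :
    ContinuousOn (Function.uncurry C) (Icc 0 1 ×ˢ Icc 0 1) := by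
  refine (LipschitzOnWith.of_dist_le_mul (K := 2) fun p hp q hq => ?_).continuousOn
  have h₁ := (hC.lipschitzOnWith_fst hp.2).dist_le_mul p.1 hp.1 q.1 hq.1
  have h₂ := (hC.lipschitzOnWith_snd hq.1).dist_le_mul p.2 hp.2 q.2 hq.2
  simp only [NNReal.coe_one, one_mul] at h₁ h₂
  calc dist (C p.1 p.2) (C q.1 q.2) ≤ dist (C p.1 p.2) (C q.1 p.2) + dist (C q.1 p.2) (C q.1 q.2) :=
        dist_triangle _ _ _
    _ ≤ dist p q + dist p q := by
        rw [Prod.dist_eq] at *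
        exact add_le_add (h₁.trans (le_max_left _ _)) (h₂.trans (le_max_right _ _))
    _ = 2 * dist p q := by ring

lemma zeroOnBoundary_csub (hC : IsCopula C) (hD : IsCopula D) : ZeroOnBoundary (csub C D) := by
  rintro x hx y hy ((rfl | rfl) | (rfl | rfl)) <;> unfold csub
  · rw [hC.2.1 y hy, hD.2.1 y hy, sub_zero]
  · rw [hC.2.2.2.1 y hy, hD.2.2.2.1 y hy, sub_self]
  · rw [hC.1 x hx, hD.1 x hx, sub_zero]
  · rw [hC.2.2.1 x hx, hD.2.2.1 x hx, sub_self]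

lemma abs_csub_le_one (hC : IsCopula C) (hD : IsCopula D) {u v : ℝ} (hu : u ∈ Icc (0:ℝ) 1)
    (hv : v ∈ Icc (0:ℝ) 1) : |csub C D u v| ≤ 1 := by
  have hCuv := hC.mem_Icc hu hv
  have hDuv := hD.mem_Icc hu hv
  exact abs_sub_le_iff.2 ⟨by linarith [hCuv.2, hDuv.1], by linarith [hCuv.1, hDuv.2]⟩

lemma abs_d1_csub_le (hC : IsCopula C) (hD : IsCopula D) {u v : ℝ} (hu : u ∈ Ioo (0:ℝ) 1)
    (hv : v ∈ Icc (0:ℝ) 1) : |d1 (csub C D) u v| ≤ 2 := by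
  have := norm_deriv_le_of_lipschitzOn (Icc_mem_nhds hu.1 hu.2)
    ((hC.lipschitzOnWith_fst hv).sub (hD.lipschitzOnWith_fst hv))
  norm_num at this
  exact this

lemma sq_d1_csub_le (hC : IsCopula C) (hD : IsCopula D) {u v : ℝ} (hu : u ∈ Ioo (0:ℝ) 1)
    (hv : v ∈ Icc (0:ℝ) 1) : d1 (csub C D) u v ^ 2 ≤ 4 := by
  have := abs_le.1 (hC.abs_d1_csub_le hD hu hv)
  nlinarith

lemma sq_d2_csub_le (hC : IsCopula C) (hD : IsCopula D) {u v : ℝ} (hu : u ∈ Icc (0:ℝ) 1)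
    (hv : v ∈ Ioo (0:ℝ) 1) : d2 (csub C D) u v ^ 2 ≤ 4 :=
  hC.ctransp.sq_d1_csub_le hD.ctransp hv hu

end IsCopula

section Patch

variable {k ℓ : ℕ} {a : Fin k → Fin ℓ → ℝ}

lemma csub_patch (C D : ℝ → ℝ → ℝ) : csub (patch a C) (patch a D) = patch a (csub C D) := by
  funext u v
  simp only [csub, patch, mul_sub, Finset.sum_sub_distrib]

lemma ctransp_patch (E : ℝ → ℝ → ℝ) :
    ctransp (patch a E) = patch (fun j i => a i j) (ctransp E) := by
  funext u v
  simp only [ctransp, patch]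
  exact Finset.sum_comm

namespace IsTransfMatrix

lemma patch_congr (ha : IsTransfMatrix a) {C D : ℝ → ℝ → ℝ}
    (h : ∀ x ∈ Icc (0:ℝ) 1, ∀ y ∈ Icc (0:ℝ) 1, C x y = D x y) (u v : ℝ) :
    patch a C u v = patch a D u v :=
  Finset.sum_congr rfl fun i _ => Finset.sum_congr rfl fun j _ => by
    rw [h _ (ha.Fdist_mem_Icc i u) _ (ha.Gdist_mem_Icc j v)]

variable {E : ℝ → ℝ → ℝ} {u v : ℝ}

lemma mul_apply_Fdist_Gdist_eq_zero (ha : IsTransfMatrix a) (hE : ZeroOnBoundary E) {i : Fin k}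
    {j : Fin ℓ} (h : (Fdist a i u = 0 ∨ Fdist a i u = 1) ∨ (Gdist a j v = 0 ∨ Gdist a j v = 1)) :
    a i j * E (Fdist a i u) (Gdist a j v) = 0 := by
  rw [hE _ (ha.Fdist_mem_Icc i u) _ (ha.Gdist_mem_Icc j v) h, mul_zero]

lemma patch_of_mem_Ioo (ha : IsTransfMatrix a) (hE : ZeroOnBoundary E) {i : Fin k} {j : Fin ℓ}
    (hu : u ∈ Ioo (pP a i) (pP a (i + 1))) (hv : v ∈ Ioo (qQ a j) (qQ a (j + 1))) :
    patch a E u v = a i j * E (Fdist a i u) (Gdist a j v) := by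
  rw [patch, Finset.sum_eq_single i, Finset.sum_eq_single j]
  · exact fun j' _ hj => ha.mul_apply_Fdist_Gdist_eq_zero hE
      (.inr (ha.Gdist_eq_zero_or_one (ha.notMem_Ioo_qQ_of_ne hv hj)))
  · simp
  · exact fun i' _ hi => Finset.sum_eq_zero fun j' _ => ha.mul_apply_Fdist_Gdist_eq_zero hE
      (.inl (ha.Fdist_eq_zero_or_one (ha.notMem_Ioo_pP_of_ne hu hi)))
  · simp

lemma patch_eq_zero_of_forall_notMem_fst (ha : IsTransfMatrix a) (hE : ZeroOnBoundary E)
    (hu : ∀ i : Fin k, u ∉ Ioo (pP a i) (pP a (i + 1))) (v : ℝ) : patch a E u v = 0 :=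
  Finset.sum_eq_zero fun i _ => Finset.sum_eq_zero fun _ _ =>
    ha.mul_apply_Fdist_Gdist_eq_zero hE (.inl (ha.Fdist_eq_zero_or_one (hu i)))

lemma patch_eq_zero_of_forall_notMem_snd (ha : IsTransfMatrix a) (hE : ZeroOnBoundary E) (u : ℝ)
    (hv : ∀ j : Fin ℓ, v ∉ Ioo (qQ a j) (qQ a (j + 1))) : patch a E u v = 0 :=
  Finset.sum_eq_zero fun _ _ => Finset.sum_eq_zero fun j _ =>
    ha.mul_apply_Fdist_Gdist_eq_zero hE (.inr (ha.Gdist_eq_zero_or_one (hv j)))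

lemma abs_patch_le (ha : IsTransfMatrix a) (hE : ZeroOnBoundary E) {B lam : ℝ} (hlam₀ : 0 ≤ lam)
    (hlam : ∀ i j, a i j ≤ lam) (hB : ∀ x ∈ Icc (0:ℝ) 1, ∀ y ∈ Icc (0:ℝ) 1, |E x y| ≤ B)
    (u v : ℝ) : |patch a E u v| ≤ lam * B := by
  have hB₀ : 0 ≤ B := (abs_nonneg _).trans (hB 0 (by simp) 0 (by simp))
  by_cases hu : ∃ i : Fin k, u ∈ Ioo (pP a i) (pP a (i + 1))
  · by_cases hv : ∃ j : Fin ℓ, v ∈ Ioo (qQ a j) (qQ a (j + 1))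
    · obtain ⟨i, hi⟩ := hu
      obtain ⟨j, hj⟩ := hv
      rw [ha.patch_of_mem_Ioo hE hi hj, abs_mul, abs_of_nonneg (ha.1 i j)]
      exact mul_le_mul (hlam i j) (hB _ (ha.Fdist_mem_Icc i u) _ (ha.Gdist_mem_Icc j v))
        (abs_nonneg _) hlam₀
    · rw [ha.patch_eq_zero_of_forall_notMem_snd hE u (not_exists.1 hv), abs_zero]
      positivity
  · rw [ha.patch_eq_zero_of_forall_notMem_fst hE (not_exists.1 hu) v, abs_zero]
    positivity

lemma isCopula_patch (ha : IsTransfMatrix a) {C : ℝ → ℝ → ℝ} (hC : IsCopula C) :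
    IsCopula (patch a C) := by
  have hF := ha.Fdist_mem_Icc
  have hG := ha.Gdist_mem_Icc
  have hF₀ (i : Fin k) : Fdist a i 0 = 0 := Fdist_of_le (ha.pP_nonneg i)
  have hG₀ (j : Fin ℓ) : Gdist a j 0 = 0 := Fdist_of_le (ha.qQ_nonneg j)
  have hF₁ (i : Fin k) : Fdist a i 1 = 1 := ha.Fdist_of_ge (ha.pP_le_one _)
  have hG₁ (j : Fin ℓ) : Gdist a j 1 = 1 := ha.transpose.Fdist_of_ge (ha.qQ_le_one _)
  refine ⟨fun u _ => ?_, fun v _ => ?_, fun u hu => ?_, fun v hv => ?_, ?_⟩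
  · simp [patch, hG₀, hC.1 _ (hF _ u)]
  · simp [patch, hF₀, hC.2.1 _ (hG _ v)]
  · simp only [patch, hG₁, hC.2.2.1 _ (hF _ u), ← Finset.sum_mul]
    exact ha.sum_mul_Fdist hu
  · simp only [patch, hF₁, hC.2.2.2.1 _ (hG _ v)]
    rw [Finset.sum_comm]
    simp only [← Finset.sum_mul]
    exact ha.transpose.sum_mul_Fdist hv
  · intro u₁ u₂ v₁ v₂ _ _ _ _ hu hv
    simp only [patch, ← Finset.sum_sub_distrib, ← Finset.sum_add_distrib, ← mul_sub, ← mul_add]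
    refine Finset.sum_nonneg fun i _ => Finset.sum_nonneg fun j _ => mul_nonneg (ha.1 i j) ?_
    exact hC.2.2.2.2 _ _ _ _ (hF i u₁) (hF i u₂) (hG j v₁) (hG j v₂) (ha.Fdist_mono i hu)
      (ha.Gdist_mono j hv)

lemma isCopula_iterate_patch (ha : IsTransfMatrix a) {C : ℝ → ℝ → ℝ} (hC : IsCopula C) (r : ℕ) :
    IsCopula ((patch a)^[r] C) := by
  induction r with
  | zero => exact hC
  | succ r ih => rw [Function.iterate_succ_apply']; exact ha.isCopula_patch ih

end IsTransfMatrix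

end Patch

lemma isCopula_mul : IsCopula (fun u v => u * v) :=
  ⟨fun u _ => mul_zero u, fun v _ => zero_mul v, fun u _ => mul_one u, fun v _ => one_mul v,
    fun _ _ _ _ _ _ _ _ hu hv => by nlinarith⟩

lemma IsCopula.of_tendsto {C : ℝ → ℝ → ℝ} {Cn : ℕ → ℝ → ℝ → ℝ} (hCn : ∀ n, IsCopula (Cn n))
    (h : ∀ u ∈ Icc (0:ℝ) 1, ∀ v ∈ Icc (0:ℝ) 1, Tendsto (fun n => Cn n u v) atTop (𝓝 (C u v))) :
    IsCopula C := by
  have h0 : (0:ℝ) ∈ Icc (0:ℝ) 1 := by simp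
  have h1 : (1:ℝ) ∈ Icc (0:ℝ) 1 := by simp
  refine ⟨fun u hu => tendsto_nhds_unique (h u hu 0 h0) ?_,
    fun v hv => tendsto_nhds_unique (h 0 h0 v hv) ?_,
    fun u hu => tendsto_nhds_unique (h u hu 1 h1) ?_,
    fun v hv => tendsto_nhds_unique (h 1 h1 v hv) ?_,
    fun u₁ u₂ v₁ v₂ hu₁ hu₂ hv₁ hv₂ hu hv => ge_of_tendsto
      ((((h u₂ hu₂ v₂ hv₂).sub (h u₂ hu₂ v₁ hv₁)).sub (h u₁ hu₁ v₂ hv₂)).add (h u₁ hu₁ v₁ hv₁))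
      (Eventually.of_forall fun n => (hCn n).2.2.2.2 u₁ u₂ v₁ v₂ hu₁ hu₂ hv₁ hv₂ hu hv)⟩
  · exact (tendsto_congr fun n => (hCn n).1 u hu).2 tendsto_const_nhds
  · exact (tendsto_congr fun n => (hCn n).2.1 v hv).2 tendsto_const_nhds
  · exact (tendsto_congr fun n => (hCn n).2.2.1 u hu).2 tendsto_const_nhds
  · exact (tendsto_congr fun n => (hCn n).2.2.2.1 v hv).2 tendsto_const_nhds

section Invariant

variable {k ℓ : ℕ} {a : Fin k → Fin ℓ → ℝ}

def invariantCopula (a : Fin k → Fin ℓ → ℝ) : ℝ → ℝ → ℝ :=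
  fun u v => limUnder atTop fun r => (patch a)^[r] (fun x y => x * y) u v

namespace IsTransfMatrix

lemma exists_forall_le_lt_one (hk : 2 ≤ k) (ha : IsTransfMatrix a) :
    ∃ lam : ℝ, 0 ≤ lam ∧ lam < 1 ∧ ∀ i j, a i j ≤ lam := by
  have : Nontrivial (Fin k) := Fin.nontrivial_iff_two_le.2 hk
  let Δp : Fin k → ℝ := fun i => pP a (i + 1) - pP a i
  let s := Finset.univ.sup' Finset.univ_nonempty Δp
  have hs (i : Fin k) : Δp i ≤ s := Finset.le_sup' Δp (Finset.mem_univ i)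
  refine ⟨s, (ha.pP_succ_sub_pos ⟨0, by omega⟩).le.trans (hs _), ?_, fun i j => ?_⟩
  · exact (Finset.sup'_lt_iff _).2 fun i _ =>
      lt_one_of_sum_eq_one ha.pP_succ_sub_pos ha.sum_pP_succ_sub i
  · exact (ha.le_pP_succ_sub i j).trans (hs i)

lemma abs_iterate_patch_sub_le (ha : IsTransfMatrix a) {lam : ℝ} (hlam₀ : 0 ≤ lam)
    (hlam : ∀ i j, a i j ≤ lam) {C D : ℝ → ℝ → ℝ} (hC : IsCopula C) (hD : IsCopula D) (r : ℕ) :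
    ∀ u ∈ Icc (0:ℝ) 1, ∀ v ∈ Icc (0:ℝ) 1,
      |(patch a)^[r] C u v - (patch a)^[r] D u v| ≤ lam ^ r := by
  induction r with
  | zero => exact fun u hu v hv => (pow_zero lam).symm ▸ hC.abs_csub_le_one hD hu hv
  | succ r ih =>
    intro u _ v _
    have hE := (ha.isCopula_iterate_patch hC r).zeroOnBoundary_csub (ha.isCopula_iterate_patch hD r)
    rw [Function.iterate_succ_apply', Function.iterate_succ_apply', pow_succ']
    have := ha.abs_patch_le hE hlam₀ hlam ih u v
    rwa [← csub_patch] at this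

lemma tendsto_patch (ha : IsTransfMatrix a) {C : ℝ → ℝ → ℝ} {Cn : ℕ → ℝ → ℝ → ℝ}
    (h : ∀ x ∈ Icc (0:ℝ) 1, ∀ y ∈ Icc (0:ℝ) 1, Tendsto (fun n => Cn n x y) atTop (𝓝 (C x y)))
    (u v : ℝ) : Tendsto (fun n => patch a (Cn n) u v) atTop (𝓝 (patch a C u v)) :=
  tendsto_finsetSum _ fun i _ => tendsto_finsetSum _ fun j _ =>
    (h _ (ha.Fdist_mem_Icc i u) _ (ha.Gdist_mem_Icc j v)).const_mul _

lemma iterate_patch_eq_of_fixed (ha : IsTransfMatrix a) {C : ℝ → ℝ → ℝ}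
    (hfix : ∀ u ∈ Icc (0:ℝ) 1, ∀ v ∈ Icc (0:ℝ) 1, patch a C u v = C u v) (r : ℕ) :
    ∀ u ∈ Icc (0:ℝ) 1, ∀ v ∈ Icc (0:ℝ) 1, (patch a)^[r] C u v = C u v := by
  induction r with
  | zero => exact fun _ _ _ _ => rfl
  | succ r ih =>
    intro u hu v hv
    rw [Function.iterate_succ_apply', ha.patch_congr ih, hfix u hu v hv]

lemma tendsto_iterate_patch_invariantCopula (hk : 2 ≤ k) (ha : IsTransfMatrix a) {u v : ℝ}
    (hu : u ∈ Icc (0:ℝ) 1) (hv : v ∈ Icc (0:ℝ) 1) :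
    Tendsto (fun r => (patch a)^[r] (fun x y => x * y) u v) atTop
      (𝓝 (invariantCopula a u v)) := by
  obtain ⟨lam, hlam₀, hlam₁, hlam⟩ := ha.exists_forall_le_lt_one hk
  refine (cauchySeq_of_le_geometric lam 1 hlam₁ fun r => ?_).tendsto_limUnder
  rw [Real.dist_eq, Function.iterate_succ_apply, one_mul]
  exact ha.abs_iterate_patch_sub_le hlam₀ hlam isCopula_mul (ha.isCopula_patch isCopula_mul)
    r u hu v hv

lemma isCopula_invariantCopula (hk : 2 ≤ k) (ha : IsTransfMatrix a) :
    IsCopula (invariantCopula a) :=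
  .of_tendsto (ha.isCopula_iterate_patch isCopula_mul) fun _ hu _ hv =>
    ha.tendsto_iterate_patch_invariantCopula hk hu hv

lemma patch_invariantCopula (hk : 2 ≤ k) (ha : IsTransfMatrix a) {u v : ℝ}
    (hu : u ∈ Icc (0:ℝ) 1) (hv : v ∈ Icc (0:ℝ) 1) :
    patch a (invariantCopula a) u v = invariantCopula a u v := by
  refine tendsto_nhds_unique (ha.tendsto_patch
    (fun _ hx _ hy => ha.tendsto_iterate_patch_invariantCopula hk hx hy) u v) ?_
  simpa only [Function.iterate_succ_apply'] using
    (tendsto_add_atTop_iff_nat 1).2 (ha.tendsto_iterate_patch_invariantCopula hk hu hv)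

lemma eq_invariantCopula_of_patch_eq (hk : 2 ≤ k) (ha : IsTransfMatrix a) {C : ℝ → ℝ → ℝ}
    (hC : IsCopula C) (hfix : ∀ u ∈ Icc (0:ℝ) 1, ∀ v ∈ Icc (0:ℝ) 1, patch a C u v = C u v)
    {u v : ℝ} (hu : u ∈ Icc (0:ℝ) 1) (hv : v ∈ Icc (0:ℝ) 1) : C u v = invariantCopula a u v := by
  obtain ⟨lam, hlam₀, hlam₁, hlam⟩ := ha.exists_forall_le_lt_one hk
  have hfixA := fun x hx y hy => ha.patch_invariantCopula hk (u := x) (v := y) hx hy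
  have hdist (r : ℕ) : |C u v - invariantCopula a u v| ≤ lam ^ r := by
    rw [← ha.iterate_patch_eq_of_fixed hfix r u hu v hv,
      ← ha.iterate_patch_eq_of_fixed hfixA r u hu v hv]
    exact ha.abs_iterate_patch_sub_le hlam₀ hlam hC (ha.isCopula_invariantCopula hk) r u hu v hv
  have := ge_of_tendsto' (tendsto_pow_atTop_nhds_zero_of_lt_one hlam₀ hlam₁) hdist
  exact sub_eq_zero.1 (abs_nonpos_iff.1 this)

end IsTransfMatrix

end Invariant

lemma deriv_comp_sub_div (g : ℝ → ℝ) (p c u : ℝ) :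
    deriv (fun x => g ((x - p) / c)) u = deriv g ((u - p) / c) / c := by
  simp_rw [div_eq_inv_mul]
  rw [deriv_comp_sub_const (fun y => g (c⁻¹ * y)), deriv_comp_mul_left, smul_eq_mul]

section Cells

variable {k ℓ : ℕ} {a : Fin k → Fin ℓ → ℝ}

namespace IsTransfMatrix

lemma integral_eq_sum_cells (ha : IsTransfMatrix a) {f g : ℝ → ℝ} {c : Fin k → ℝ}
    (hf : IntervalIntegrable f volume 0 1)
    (h : ∀ i : Fin k, ∀ u ∈ Ioo (pP a i) (pP a (i + 1)), f u = c i * g (Fdist a i u)) :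
    ∫ u in (0:ℝ)..1, f u = ∑ i, c i * (pP a (i + 1) - pP a i) * ∫ x in (0:ℝ)..1, g x := by
  have hsplit := intervalIntegral.sum_integral_adjacent_intervals (μ := volume) (a := pP a)
    (n := k) fun m _ => hf.mono_set (uIcc_subset_uIcc
      (mem_uIcc_of_le (ha.pP_nonneg m) (ha.pP_le_one m))
      (mem_uIcc_of_le (ha.pP_nonneg _) (ha.pP_le_one _)))
  rw [pP_zero, ha.pP_eq_one le_rfl] at hsplit
  rw [← hsplit, ← Fin.sum_univ_eq_sum_range (fun m => ∫ u in pP a m..pP a (m + 1), f u)]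
  refine Finset.sum_congr rfl fun i _ => ?_
  have hΔ : pP a (i + 1) - pP a i ≠ 0 := (ha.pP_succ_sub_pos i).ne'
  rw [intervalIntegral.integral_congr_Ioo_of_le (ha.pP_lt_succ i).le fun u hu => by
      rw [h i u hu, Fdist_of_mem_Ioo hu],
    intervalIntegral.integral_const_mul, mul_assoc,
    intervalIntegral.integral_comp_sub_right (fun x => g (x / (pP a (i + 1) - pP a i))),
    intervalIntegral.integral_comp_div _ hΔ, sub_self, zero_div, div_self hΔ, smul_eq_mul]

variable {E : ℝ → ℝ → ℝ} {i : Fin k} {j : Fin ℓ} {u v : ℝ}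

lemma d1_patch_of_mem_Ioo (ha : IsTransfMatrix a) (hE : ZeroOnBoundary E)
    (hu : u ∈ Ioo (pP a i) (pP a (i + 1))) (hv : v ∈ Ioo (qQ a j) (qQ a (j + 1))) :
    d1 (patch a E) u v = a i j / (pP a (i + 1) - pP a i) * d1 E (Fdist a i u) (Gdist a j v) := by
  have hev : (fun x => patch a E x v) =ᶠ[𝓝 u]
      fun x => a i j * E ((x - pP a i) / (pP a (i + 1) - pP a i)) (Gdist a j v) := by
    filter_upwards [isOpen_Ioo.mem_nhds hu] with x hx
    rw [ha.patch_of_mem_Ioo hE hx hv, Fdist_of_mem_Ioo hx]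
  rw [d1, hev.deriv_eq, deriv_const_mul_field, deriv_comp_sub_div (fun x => E x (Gdist a j v)),
    ← Fdist_of_mem_Ioo hu, d1]
  ring

lemma d2_patch_of_mem_Ioo (ha : IsTransfMatrix a) (hE : ZeroOnBoundary E)
    (hu : u ∈ Ioo (pP a i) (pP a (i + 1))) (hv : v ∈ Ioo (qQ a j) (qQ a (j + 1))) :
    d2 (patch a E) u v = a i j / (qQ a (j + 1) - qQ a j) * d2 E (Fdist a i u) (Gdist a j v) := by
  have := ha.transpose.d1_patch_of_mem_Ioo hE.ctransp hv hu
  rw [← ctransp_patch] at this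
  exact this

end IsTransfMatrix

end Cells

-- `d2 E · v` differentiates in the other variable, so its measurability in `u` comes from
-- `measurable_deriv_with_param` applied to the extension of `E` by clamping to the square.
lemma aestronglyMeasurable_d2 {E : ℝ → ℝ → ℝ}
    (hE : ContinuousOn (Function.uncurry E) (Icc 0 1 ×ˢ Icc 0 1)) {v : ℝ} (hv : v ∈ Ioo (0:ℝ) 1) :
    AEStronglyMeasurable (fun u => d2 E u v) (volume.restrict (Ioo 0 1)) := by
  let π : ℝ → ℝ := fun t => projIcc (0:ℝ) 1 zero_le_one t
  have hπ : Continuous π := continuous_subtype_val.comp continuous_projIcc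
  have hĒ : Continuous (Function.uncurry fun x y => E (π x) (π y)) :=
    hE.comp_continuous (hπ.prodMap hπ) fun p =>
      ⟨(projIcc (0:ℝ) 1 zero_le_one p.1).2, (projIcc (0:ℝ) 1 zero_le_one p.2).2⟩
  have hmeas : Measurable fun u => d2 (fun x y => E (π x) (π y)) u v :=
    (measurable_deriv_with_param hĒ).comp (measurable_id.prodMk measurable_const)
  refine hmeas.aestronglyMeasurable.congr ((ae_restrict_iff' measurableSet_Ioo).2 (ae_of_all _ ?_))
  intro u hu
  refine EventuallyEq.deriv_eq ?_
  filter_upwards [isOpen_Ioo.mem_nhds hv] with y hy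
  simp only [π, projIcc_of_mem _ (Ioo_subset_Icc_self hu),
    projIcc_of_mem _ (Ioo_subset_Icc_self hy)]

namespace IsCopula

variable {C D : ℝ → ℝ → ℝ}

lemma intervalIntegrable_d1_csub_sq (hC : IsCopula C) (hD : IsCopula D) {v : ℝ}
    (hv : v ∈ Icc (0:ℝ) 1) : IntervalIntegrable (fun u => d1 (csub C D) u v ^ 2) volume 0 1 :=
  intervalIntegrable_of_abs_le (M := 4) zero_le_one
    ((measurable_deriv _).pow_const 2).aestronglyMeasurable fun _ hu =>
      (abs_of_nonneg (sq_nonneg _)).trans_le (hC.sq_d1_csub_le hD hu hv)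

lemma intervalIntegrable_d2_csub_sq (hC : IsCopula C) (hD : IsCopula D) {v : ℝ}
    (hv : v ∈ Ioo (0:ℝ) 1) : IntervalIntegrable (fun u => d2 (csub C D) u v ^ 2) volume 0 1 :=
  intervalIntegrable_of_abs_le (M := 4) zero_le_one
    ((aestronglyMeasurable_d2 (E := csub C D) (hC.continuousOn.sub hD.continuousOn) hv).pow 2)
    fun _ hu => (abs_of_nonneg (sq_nonneg _)).trans_le
      (hC.sq_d2_csub_le hD (Ioo_subset_Icc_self hu) hv)

lemma integral_d1_csub_sq_le (hC : IsCopula C) (hD : IsCopula D) {v : ℝ}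
    (hv : v ∈ Ioo (0:ℝ) 1) : ∫ u in (0:ℝ)..1, d1 (csub C D) u v ^ 2 ≤ 4 := by
  simpa using intervalIntegral.integral_le_of_le_off_countable countable_empty
    (intervalIntegrable_const (c := (4:ℝ))) (by simp) fun u hu _ =>
      hC.sq_d1_csub_le hD hu (Ioo_subset_Icc_self hv)

lemma integral_d2_csub_sq_le (hC : IsCopula C) (hD : IsCopula D) {v : ℝ}
    (hv : v ∈ Ioo (0:ℝ) 1) : ∫ u in (0:ℝ)..1, d2 (csub C D) u v ^ 2 ≤ 4 := by
  simpa using intervalIntegral.integral_le_of_le_off_countable countable_empty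
    (intervalIntegrable_const (c := (4:ℝ))) (by simp) fun u hu _ =>
      hC.sq_d2_csub_le hD (Ioo_subset_Icc_self hu) hv

end IsCopula

lemma div_sq_mul_le {x d e : ℝ} (hx : 0 ≤ x) (hxd : x ≤ d) (he : 0 ≤ e) :
    (x / d) ^ 2 * e ≤ x / d * e := by
  have h₀ : 0 ≤ x / d := div_nonneg hx (hx.trans hxd)
  have h₁ : x / d ≤ 1 := div_le_one_of_le₀ hxd (hx.trans hxd)
  exact mul_le_mul_of_nonneg_right (by nlinarith) he

section Coefficients

variable {k ℓ : ℕ} {a : Fin k → Fin ℓ → ℝ}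

def l2Factor₁ (a : Fin k → Fin ℓ → ℝ) (j : Fin ℓ) : ℝ :=
  ∑ i, (a i j / (pP a (i + 1) - pP a i)) ^ 2 * (pP a (i + 1) - pP a i)

def l2Factor₂ (a : Fin k → Fin ℓ → ℝ) (j : Fin ℓ) : ℝ :=
  ∑ i, (a i j / (qQ a (j + 1) - qQ a j)) ^ 2 * (pP a (i + 1) - pP a i)

namespace IsTransfMatrix

lemma l2Factor₁_nonneg (ha : IsTransfMatrix a) (j : Fin ℓ) : 0 ≤ l2Factor₁ a j :=
  Finset.sum_nonneg fun i _ => mul_nonneg (sq_nonneg _) (ha.pP_succ_sub_pos i).le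

lemma l2Factor₁_le (ha : IsTransfMatrix a) (j : Fin ℓ) : l2Factor₁ a j ≤ qQ a (j + 1) - qQ a j := by
  rw [qQ_succ_sub]
  refine Finset.sum_le_sum fun i _ => (div_sq_mul_le (ha.1 i j) (ha.le_pP_succ_sub i j)
    (ha.pP_succ_sub_pos i).le).trans_eq ?_
  exact div_mul_cancel₀ _ (ha.pP_succ_sub_pos i).ne'

lemma l2Factor₁_le_one (ha : IsTransfMatrix a) (j : Fin ℓ) : l2Factor₁ a j ≤ 1 :=
  (ha.l2Factor₁_le j).trans (ha.transpose.pP_succ_sub_le_one j)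

lemma sum_l2Factor₁_mul_lt_one (hℓ : 2 ≤ ℓ) (ha : IsTransfMatrix a) :
    ∑ j, l2Factor₁ a j * (qQ a (j + 1) - qQ a j) < 1 := by
  have : Nontrivial (Fin ℓ) := Fin.nontrivial_iff_two_le.2 hℓ
  refine lt_of_le_of_lt (Finset.sum_le_sum fun j _ => ?_)
    (sum_sq_lt_one (fun j => ha.qQ_succ_sub_pos j) ha.transpose.sum_pP_succ_sub)
  rw [sq]
  exact mul_le_mul_of_nonneg_right (ha.l2Factor₁_le j) (ha.qQ_succ_sub_pos j).le

lemma l2Factor₂_nonneg (ha : IsTransfMatrix a) (j : Fin ℓ) : 0 ≤ l2Factor₂ a j :=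
  Finset.sum_nonneg fun i _ => mul_nonneg (sq_nonneg _) (ha.pP_succ_sub_pos i).le

lemma l2Factor₂_le_one (ha : IsTransfMatrix a) (j : Fin ℓ) : l2Factor₂ a j ≤ 1 := by
  have hΔ := ha.qQ_succ_sub_pos j
  calc l2Factor₂ a j ≤ ∑ i, a i j / (qQ a (j + 1) - qQ a j) * 1 :=
        Finset.sum_le_sum fun i _ => (div_sq_mul_le (ha.1 i j) (ha.le_qQ_succ_sub i j)
          (ha.pP_succ_sub_pos i).le).trans (mul_le_mul_of_nonneg_left
            (ha.pP_succ_sub_le_one i) (div_nonneg (ha.1 i j) hΔ.le))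
    _ = 1 := by rw [← Finset.sum_mul, ← Finset.sum_div, ← qQ_succ_sub, div_self hΔ.ne', mul_one]

lemma sum_l2Factor₂_mul_lt_one (hk : 2 ≤ k) (ha : IsTransfMatrix a) :
    ∑ j, l2Factor₂ a j * (qQ a (j + 1) - qQ a j) < 1 := by
  have : Nontrivial (Fin k) := Fin.nontrivial_iff_two_le.2 hk
  have hterm (j : Fin ℓ) : l2Factor₂ a j * (qQ a (j + 1) - qQ a j)
      ≤ ∑ i, a i j * (pP a (i + 1) - pP a i) := by
    have hΔ := ha.qQ_succ_sub_pos j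
    rw [l2Factor₂, Finset.sum_mul]
    refine Finset.sum_le_sum fun i _ => ?_
    calc (a i j / (qQ a (j + 1) - qQ a j)) ^ 2 * (pP a (i + 1) - pP a i) * (qQ a (j + 1) - qQ a j)
        ≤ a i j / (qQ a (j + 1) - qQ a j) * (pP a (i + 1) - pP a i) * (qQ a (j + 1) - qQ a j) :=
          mul_le_mul_of_nonneg_right (div_sq_mul_le (ha.1 i j) (ha.le_qQ_succ_sub i j)
            (ha.pP_succ_sub_pos i).le) hΔ.le
      _ = a i j * (pP a (i + 1) - pP a i) := by field_simp
  calc ∑ j, l2Factor₂ a j * (qQ a (j + 1) - qQ a j)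
      ≤ ∑ j, ∑ i, a i j * (pP a (i + 1) - pP a i) := Finset.sum_le_sum fun j _ => hterm j
    _ = ∑ i : Fin k, (pP a (i + 1) - pP a i) ^ 2 := by
        rw [Finset.sum_comm]
        simp only [← Finset.sum_mul, ← pP_succ_sub, sq]
    _ < 1 := sum_sq_lt_one (fun i => ha.pP_succ_sub_pos i) ha.sum_pP_succ_sub

lemma integral_d1_patch_sq (ha : IsTransfMatrix a) {C D : ℝ → ℝ → ℝ} (hC : IsCopula C)
    (hD : IsCopula D) {j : Fin ℓ} {v : ℝ} (hv : v ∈ Ioo (qQ a j) (qQ a (j + 1))) :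
    ∫ u in (0:ℝ)..1, d1 (patch a (csub C D)) u v ^ 2
      = l2Factor₁ a j * ∫ x in (0:ℝ)..1, d1 (csub C D) x (Gdist a j v) ^ 2 := by
  rw [l2Factor₁, Finset.sum_mul]
  refine ha.integral_eq_sum_cells ?_ fun i u hu => ?_
  · rw [← csub_patch]
    exact (ha.isCopula_patch hC).intervalIntegrable_d1_csub_sq (ha.isCopula_patch hD)
      (Ioo_subset_Icc_self (ha.Ioo_qQ_subset j hv))
  · rw [ha.d1_patch_of_mem_Ioo (hC.zeroOnBoundary_csub hD) hu hv, mul_pow]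

lemma integral_d2_patch_sq (ha : IsTransfMatrix a) {C D : ℝ → ℝ → ℝ} (hC : IsCopula C)
    (hD : IsCopula D) {j : Fin ℓ} {v : ℝ} (hv : v ∈ Ioo (qQ a j) (qQ a (j + 1))) :
    ∫ u in (0:ℝ)..1, d2 (patch a (csub C D)) u v ^ 2
      = l2Factor₂ a j * ∫ x in (0:ℝ)..1, d2 (csub C D) x (Gdist a j v) ^ 2 := by
  rw [l2Factor₂, Finset.sum_mul]
  refine ha.integral_eq_sum_cells ?_ fun i u hu => ?_
  · rw [← csub_patch]
    exact (ha.isCopula_patch hC).intervalIntegrable_d2_csub_sq (ha.isCopula_patch hD)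
      (ha.Ioo_qQ_subset j hv)
  · rw [ha.d2_patch_of_mem_Ioo (hC.zeroOnBoundary_csub hD) hu hv, mul_pow]

end IsTransfMatrix

end Coefficients

section RowWeight

variable {k ℓ : ℕ} {a : Fin k → Fin ℓ → ℝ} {β : Fin ℓ → ℝ}

-- `4 * rowWeight a β r` dominates `v ↦ Φ([A]^r C − [A]^r D)(v)`, off a countable set, for every
-- profile `Φ` that obeys the row recursion with factors `β`.
def rowWeight (a : Fin k → Fin ℓ → ℝ) (β : Fin ℓ → ℝ) : ℕ → ℝ → ℝ
  | 0, _ => 1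
  | r + 1, v => ∑ j : Fin ℓ, (Ioo (qQ a j) (qQ a (j + 1))).indicator
      (fun v => β j * rowWeight a β r (Gdist a j v)) v

namespace IsTransfMatrix

lemma rowWeight_succ_of_mem (ha : IsTransfMatrix a) {r : ℕ} {j : Fin ℓ} {v : ℝ}
    (hv : v ∈ Ioo (qQ a j) (qQ a (j + 1))) :
    rowWeight a β (r + 1) v = β j * rowWeight a β r (Gdist a j v) := by
  rw [rowWeight, Finset.sum_eq_single j (fun j' _ hj => indicator_of_notMem
    (ha.notMem_Ioo_qQ_of_ne hv hj) _) (by simp), indicator_of_mem hv]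

lemma rowWeight_mem_Icc (ha : IsTransfMatrix a) (hβ₀ : ∀ j, 0 ≤ β j) (hβ₁ : ∀ j, β j ≤ 1)
    (r : ℕ) (v : ℝ) : rowWeight a β r v ∈ Icc (0:ℝ) 1 := by
  induction r generalizing v with
  | zero => simp [rowWeight]
  | succ r ih =>
    by_cases hv : ∃ j : Fin ℓ, v ∈ Ioo (qQ a j) (qQ a (j + 1))
    · obtain ⟨j, hj⟩ := hv
      rw [ha.rowWeight_succ_of_mem hj]
      exact ⟨mul_nonneg (hβ₀ j) (ih _).1, mul_le_one₀ (hβ₁ j) (ih _).1 (ih _).2⟩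
    · simp [rowWeight, indicator_of_notMem (not_exists.1 hv _)]

lemma measurable_rowWeight (ha : IsTransfMatrix a) (r : ℕ) : Measurable (rowWeight a β r) := by
  induction r with
  | zero => exact measurable_const
  | succ r ih =>
    exact Finset.measurable_sum _ fun j _ =>
      (measurable_const.mul (ih.comp (ha.Gdist_mono j).measurable)).indicator measurableSet_Ioo

lemma integral_rowWeight (ha : IsTransfMatrix a) (hβ₀ : ∀ j, 0 ≤ β j) (hβ₁ : ∀ j, β j ≤ 1)
    (r : ℕ) : ∫ v in (0:ℝ)..1, rowWeight a β r v = (∑ j, β j * (qQ a (j + 1) - qQ a j)) ^ r := by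
  induction r with
  | zero => simp [rowWeight]
  | succ r ih =>
    rw [pow_succ', ← ih, Finset.sum_mul]
    refine ha.transpose.integral_eq_sum_cells ?_ fun j v hv => ha.rowWeight_succ_of_mem hv
    exact intervalIntegrable_of_abs_le zero_le_one (ha.measurable_rowWeight _).aestronglyMeasurable
      fun v _ => abs_le.2 ⟨by linarith [(ha.rowWeight_mem_Icc hβ₀ hβ₁ (r + 1) v).1],
        (ha.rowWeight_mem_Icc hβ₀ hβ₁ (r + 1) v).2⟩

end IsTransfMatrix

end RowWeight

lemma tendsto_of_le_geometric {x : ℕ → ℝ} {c s : ℝ} (hx₀ : ∀ r, 0 ≤ x r) (hs₀ : 0 ≤ s) (hs₁ : s < 1)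
    (hx : ∀ r, x r ≤ c * s ^ r) : Tendsto x atTop (𝓝 0) :=
  squeeze_zero hx₀ hx (by simpa using (tendsto_pow_atTop_nhds_zero_of_lt_one hs₀ hs₁).const_mul c)

section Sobolev

variable {k ℓ : ℕ} {a : Fin k → Fin ℓ → ℝ} {β : Fin ℓ → ℝ}

namespace IsTransfMatrix

lemma exists_countable_le_rowWeight (ha : IsTransfMatrix a) (hβ₀ : ∀ j, 0 ≤ β j)
    (Φ : (ℝ → ℝ → ℝ) → ℝ → ℝ)
    (hbase : ∀ C D, IsCopula C → IsCopula D → ∀ v ∈ Ioo (0:ℝ) 1, Φ (csub C D) v ≤ 4)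
    (hrec : ∀ C D, IsCopula C → IsCopula D → ∀ j : Fin ℓ, ∀ v ∈ Ioo (qQ a j) (qQ a (j + 1)),
      Φ (patch a (csub C D)) v = β j * Φ (csub C D) (Gdist a j v))
    {C D : ℝ → ℝ → ℝ} (hC : IsCopula C) (hD : IsCopula D) (r : ℕ) :
    ∃ S : Set ℝ, S.Countable ∧ ∀ v ∈ Ioo (0:ℝ) 1, v ∉ S →
      Φ (csub ((patch a)^[r] C) ((patch a)^[r] D)) v ≤ 4 * rowWeight a β r v := by
  induction r with
  | zero =>
    exact ⟨∅, countable_empty, fun v hv _ => by simpa [rowWeight] using hbase C D hC hD v hv⟩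
  | succ r ih =>
    obtain ⟨S, hS, hle⟩ := ih
    -- discard the grid points `q_m` and the preimages of `S` under the rescalings `G_j`
    refine ⟨range (qQ a) ∪ ⋃ j : Fin ℓ, (fun w => qQ a j + (qQ a (j + 1) - qQ a j) * w) '' S,
      (countable_range _).union (countable_iUnion fun j => hS.image _), fun v hv hvS => ?_⟩
    simp only [mem_union, mem_range, mem_iUnion, mem_image, not_or, not_exists, not_and] at hvS
    obtain ⟨j, hj⟩ := ha.exists_mem_Ioo_qQ hv fun m h => hvS.1 m h.symm
    have hGS : Gdist a j v ∉ S := fun h => hvS.2 j _ h (by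
      rw [Gdist_of_mem_Ioo hj, mul_div_cancel₀ _ (ha.qQ_succ_sub_pos j).ne']; ring)
    rw [Function.iterate_succ_apply', Function.iterate_succ_apply', csub_patch,
      hrec _ _ (ha.isCopula_iterate_patch hC r) (ha.isCopula_iterate_patch hD r) j v hj,
      ha.rowWeight_succ_of_mem hj, mul_left_comm]
    exact mul_le_mul_of_nonneg_left (hle _ (Gdist_mem_Ioo hj) hGS) (hβ₀ j)

lemma integral_csub_iterate_le (ha : IsTransfMatrix a) (hβ₀ : ∀ j, 0 ≤ β j) (hβ₁ : ∀ j, β j ≤ 1)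
    (Φ : (ℝ → ℝ → ℝ) → ℝ → ℝ)
    (hbase : ∀ C D, IsCopula C → IsCopula D → ∀ v ∈ Ioo (0:ℝ) 1, Φ (csub C D) v ≤ 4)
    (hrec : ∀ C D, IsCopula C → IsCopula D → ∀ j : Fin ℓ, ∀ v ∈ Ioo (qQ a j) (qQ a (j + 1)),
      Φ (patch a (csub C D)) v = β j * Φ (csub C D) (Gdist a j v))
    {C D : ℝ → ℝ → ℝ} (hC : IsCopula C) (hD : IsCopula D) (r : ℕ) :
    ∫ v in (0:ℝ)..1, Φ (csub ((patch a)^[r] C) ((patch a)^[r] D)) v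
      ≤ 4 * (∑ j, β j * (qQ a (j + 1) - qQ a j)) ^ r := by
  obtain ⟨S, hS, hle⟩ := ha.exists_countable_le_rowWeight hβ₀ Φ hbase hrec hC hD r
  have hW := ha.integral_rowWeight hβ₀ hβ₁ r
  rw [← hW, ← intervalIntegral.integral_const_mul]
  refine intervalIntegral.integral_le_of_le_off_countable hS ?_ ?_ hle
  · refine (intervalIntegrable_of_abs_le (M := 1) zero_le_one
      (ha.measurable_rowWeight r).aestronglyMeasurable fun v _ => ?_).const_mul 4
    have := ha.rowWeight_mem_Icc hβ₀ hβ₁ r v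
    exact abs_le.2 ⟨by linarith [this.1], this.2⟩
  · rw [intervalIntegral.integral_const_mul, hW]
    exact mul_nonneg (by norm_num) (pow_nonneg (ha.sum_mul_qQ_succ_sub_nonneg hβ₀) r)

end IsTransfMatrix

end Sobolev

lemma sobSq1_nonneg (E : ℝ → ℝ → ℝ) : 0 ≤ sobSq1 E :=
  intervalIntegral.integral_nonneg zero_le_one fun _ _ =>
    intervalIntegral.integral_nonneg zero_le_one fun _ _ => sq_nonneg _

lemma sobSq2_nonneg (E : ℝ → ℝ → ℝ) : 0 ≤ sobSq2 E :=
  intervalIntegral.integral_nonneg zero_le_one fun _ _ =>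
    intervalIntegral.integral_nonneg zero_le_one fun _ _ => sq_nonneg _

lemma sobNorm_congr {E₁ E₂ : ℝ → ℝ → ℝ}
    (h : ∀ x ∈ Ioo (0:ℝ) 1, ∀ y ∈ Ioo (0:ℝ) 1, E₁ x y = E₂ x y) : sobNorm E₁ = sobNorm E₂ := by
  have hd1 : ∀ u ∈ Ioo (0:ℝ) 1, ∀ v ∈ Ioo (0:ℝ) 1, d1 E₁ u v = d1 E₂ u v := fun u hu v hv =>
    EventuallyEq.deriv_eq (eventually_of_mem (isOpen_Ioo.mem_nhds hu) fun x hx => h x hx v hv)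
  have hd2 : ∀ u ∈ Ioo (0:ℝ) 1, ∀ v ∈ Ioo (0:ℝ) 1, d2 E₁ u v = d2 E₂ u v := fun u hu v hv =>
    EventuallyEq.deriv_eq (eventually_of_mem (isOpen_Ioo.mem_nhds hv) fun y hy => h u hu y hy)
  unfold sobNorm sobSq1 sobSq2
  congr 2 <;> refine intervalIntegral.integral_congr_Ioo_of_le zero_le_one fun v hv =>
    intervalIntegral.integral_congr_Ioo_of_le zero_le_one fun u hu => ?_
  · rw [hd1 u hu v hv]
  · rw [hd2 u hu v hv]

namespace IsTransfMatrix

variable {k ℓ : ℕ} {a : Fin k → Fin ℓ → ℝ} {C D : ℝ → ℝ → ℝ}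

lemma tendsto_sobSq1_csub_iterate (hℓ : 2 ≤ ℓ) (ha : IsTransfMatrix a) (hC : IsCopula C)
    (hD : IsCopula D) :
    Tendsto (fun r => sobSq1 (csub ((patch a)^[r] C) ((patch a)^[r] D))) atTop (𝓝 0) :=
  tendsto_of_le_geometric (fun _ => sobSq1_nonneg _)
    (ha.sum_mul_qQ_succ_sub_nonneg ha.l2Factor₁_nonneg)
    (ha.sum_l2Factor₁_mul_lt_one hℓ)
    (ha.integral_csub_iterate_le ha.l2Factor₁_nonneg ha.l2Factor₁_le_one
      (fun E v => ∫ u in (0:ℝ)..1, d1 E u v ^ 2)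
      (fun _ _ hC hD _ hv => hC.integral_d1_csub_sq_le hD hv)
      (fun _ _ hC hD _ _ hv => ha.integral_d1_patch_sq hC hD hv) hC hD)

lemma tendsto_sobSq2_csub_iterate (hk : 2 ≤ k) (ha : IsTransfMatrix a) (hC : IsCopula C)
    (hD : IsCopula D) :
    Tendsto (fun r => sobSq2 (csub ((patch a)^[r] C) ((patch a)^[r] D))) atTop (𝓝 0) :=
  tendsto_of_le_geometric (fun _ => sobSq2_nonneg _)
    (ha.sum_mul_qQ_succ_sub_nonneg ha.l2Factor₂_nonneg)
    (ha.sum_l2Factor₂_mul_lt_one hk)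
    (ha.integral_csub_iterate_le ha.l2Factor₂_nonneg ha.l2Factor₂_le_one
      (fun E v => ∫ u in (0:ℝ)..1, d2 E u v ^ 2)
      (fun _ _ hC hD _ hv => hC.integral_d2_csub_sq_le hD hv)
      (fun _ _ hC hD _ _ hv => ha.integral_d2_patch_sq hC hD hv) hC hD)

lemma tendsto_sobNorm_csub_iterate (hk : 2 ≤ k) (hℓ : 2 ≤ ℓ) (ha : IsTransfMatrix a)
    (hC : IsCopula C) (hD : IsCopula D) :
    Tendsto (fun r => sobNorm (csub ((patch a)^[r] C) ((patch a)^[r] D))) atTop (𝓝 0) := by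
  simpa [sobNorm] using ((ha.tendsto_sobSq1_csub_iterate hℓ hC hD).add
    (ha.tendsto_sobSq2_csub_iterate hk hC hD)).sqrt

end IsTransfMatrix

/-- Let `A` be a `k × ℓ` transformation matrix with `k, ℓ ≥ 2`.  Then there
exists a unique copula `C_A` with `[A](C_A) = C_A` (on the unit square), and for every copula
`D` the iterates `[A]^r(D)` converge to `C_A` in the modified Sobolev norm. -/
theorem stmt13 {k ℓ : ℕ} (hk : 2 ≤ k) (hℓ : 2 ≤ ℓ)
    (a : Fin k → Fin ℓ → ℝ) (ha : IsTransfMatrix a) :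
    ∃ CA : ℝ → ℝ → ℝ, IsCopula CA ∧
      (∀ u ∈ Icc (0:ℝ) 1, ∀ v ∈ Icc (0:ℝ) 1, patch a CA u v = CA u v) ∧
      (∀ C' : ℝ → ℝ → ℝ, IsCopula C' →
        (∀ u ∈ Icc (0:ℝ) 1, ∀ v ∈ Icc (0:ℝ) 1, patch a C' u v = C' u v) →
        ∀ u ∈ Icc (0:ℝ) 1, ∀ v ∈ Icc (0:ℝ) 1, C' u v = CA u v) ∧
      (∀ D : ℝ → ℝ → ℝ, IsCopula D →
        Filter.Tendsto (fun r : ℕ => sobNorm (csub ((patch a)^[r] D) CA))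
          Filter.atTop (nhds 0)) := by
  have hCA := ha.isCopula_invariantCopula hk
  have hfix : ∀ u ∈ Icc (0:ℝ) 1, ∀ v ∈ Icc (0:ℝ) 1,
      patch a (invariantCopula a) u v = invariantCopula a u v :=
    fun _ hu _ hv => ha.patch_invariantCopula hk hu hv
  refine ⟨invariantCopula a, hCA, hfix,
    fun C hC hCfix _ hu _ hv => ha.eq_invariantCopula_of_patch_eq hk hC hCfix hu hv,
    fun D hD => (ha.tendsto_sobNorm_csub_iterate hk hℓ hD hCA).congr fun r => sobNorm_congr ?_⟩
  intro x hx y hy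
  rw [csub, csub, ha.iterate_patch_eq_of_fixed hfix r x (Ioo_subset_Icc_self hx) y
    (Ioo_subset_Icc_self hy)]
end
end

section
/- Let A = [a_{ij}] be a k × ℓ transformation matrix, let T and T′ be Markov operators on L¹([0,1], λ) such that T′ is the A-patching of T, and let (I,J) be an invariant pair of A. If S, R ⊆ [0,1] are Borel sets with T𝟙_S = 𝟙_R λ-a.e., then T′𝟙_{S′} = 𝟙_{R′} λ-a.e., where S′ = ⋃_{j∈J} (q_{j−1} + Δq_j·S) and R′ = ⋃_{i∈I} (p_{i−1} + Δp_i·R) (the affine images; modulo λ-null sets these equal ⋃_{j∈J} G_j⁻¹(S) and ⋃_{i∈I} F_i⁻¹(R)). -/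
open MeasureTheory Set unitInterval

noncomputable section

open Classical in
/-- The indicator function `𝟙_S` of a set `S ⊆ [0,1]`, as an element of `L¹([0,1], λ)`
(where `λ` is Lebesgue measure on the unit interval `I = [0,1]`).
If `S` is not measurable we default to `0`. -/
def ind (S : Set I) : Lp ℝ 1 (volume : Measure I) :=
  if hS : MeasurableSet S then indicatorConstLp 1 hS (measure_ne_top _ _) (1:ℝ) else 0

/-- A Markov operator on `L¹([0,1], λ)`: a bounded linear operator `T` with
(i) `T𝟙 = 𝟙`, (ii) `∫ Tψ = ∫ ψ` for all `ψ ∈ L¹`, (iii) `Tψ ≥ 0` a.e. whenever `ψ ≥ 0` a.e. -/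
structure IsMarkovOperator
    (T : Lp ℝ 1 (volume : Measure I) →L[ℝ] Lp ℝ 1 (volume : Measure I)) : Prop where
  map_one : T (ind univ) = ind univ
  integral_map : ∀ ψ : Lp ℝ 1 (volume : Measure I), ∫ x, (T ψ) x = ∫ x, ψ x
  positive : ∀ ψ : Lp ℝ 1 (volume : Measure I), 0 ≤ᵐ[volume] ⇑ψ → 0 ≤ᵐ[volume] ⇑(T ψ)

/-- Clamp a real number into the unit interval. -/
def toI (x : ℝ) : I := ⟨min 1 (max 0 x), le_min zero_le_one (le_max_left 0 x), min_le_left _ _⟩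

/-- The uniform distribution function `F_i(u) = min(1, (u − p_{i−1})/Δp_i)·𝟙_{(p_{i−1},∞)}(u)`
on `[p_{i−1}, p_i]`, as a map `[0,1] → [0,1]` (for `i : Fin k`, `p_{i−1} = pP a i` and
`p_i = pP a (i+1)`). -/
def FdistI {k ℓ : ℕ} (a : Fin k → Fin ℓ → ℝ) (i : Fin k) (x : I) : I :=
  toI (if pP a (i : ℕ) < (x : ℝ) then
    min 1 (((x : ℝ) - pP a (i : ℕ)) / (pP a ((i : ℕ) + 1) - pP a (i : ℕ))) else 0)

/-- The affine map `G̃_j(s) = q_{j−1} + s·Δq_j` of `[0,1]` onto `[q_{j−1}, q_j]`. -/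
def Gtilde {k ℓ : ℕ} (a : Fin k → Fin ℓ → ℝ) (j : Fin ℓ) (x : I) : I :=
  toI (qQ a (j : ℕ) + (x : ℝ) * (qQ a ((j : ℕ) + 1) - qQ a (j : ℕ)))

/-- The affine map `F̃_i(s) = p_{i−1} + s·Δp_i` of `[0,1]` onto `[p_{i−1}, p_i]`. -/
def Ftilde {k ℓ : ℕ} (a : Fin k → Fin ℓ → ℝ) (i : Fin k) (x : I) : I :=
  toI (pP a (i : ℕ) + (x : ℝ) * (pP a ((i : ℕ) + 1) - pP a (i : ℕ)))

/-- `T'` is the `A`-patching of `T`: for every `ψ ∈ L¹` and λ-a.e. `x`,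
`T'ψ(x) = Σ_i Σ_j (a_{ij}/Δp_i) · (T(ψ ∘ G̃_j))(F_i(x))`.  (Here `φ j` is any
`L¹`-representative of `ψ ∘ G̃_j`.) -/
def IsAPatching {k ℓ : ℕ} (a : Fin k → Fin ℓ → ℝ)
    (T' T : Lp ℝ 1 (volume : Measure I) →L[ℝ] Lp ℝ 1 (volume : Measure I)) : Prop :=
  ∀ (ψ : Lp ℝ 1 (volume : Measure I)) (φ : Fin ℓ → Lp ℝ 1 (volume : Measure I)),
    (∀ j, ⇑(φ j) =ᵐ[volume] fun x => ψ (Gtilde a j x)) →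
    ⇑(T' ψ) =ᵐ[volume] fun x =>
      ∑ i, ∑ j, (a i j / (pP a ((i : ℕ) + 1) - pP a (i : ℕ))) * (T (φ j)) (FdistI a i x)

/-- `(I₀, J₀)` is an invariant pair of the transformation matrix `a`. -/
def IsInvariantPair {k ℓ : ℕ} (a : Fin k → Fin ℓ → ℝ)
    (I₀ : Finset (Fin k)) (J₀ : Finset (Fin ℓ)) : Prop :=
  I₀.Nonempty ∧ J₀.Nonempty ∧
  (∀ i j, ((i ∈ I₀ ∧ j ∉ J₀) ∨ (i ∉ I₀ ∧ j ∈ J₀)) → a i j = 0) ∧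
  (∃ i ∈ I₀, ∃ j ∈ J₀, a i j ≠ 0)

/-- `a` is disjointly decomposable by the `N` invariant pairs `(Is n, Js n)`. -/
def DisjointlyDecomposable {k ℓ N : ℕ} (a : Fin k → Fin ℓ → ℝ)
    (Is : Fin N → Finset (Fin k)) (Js : Fin N → Finset (Fin ℓ)) : Prop :=
  (∀ n, IsInvariantPair a (Is n) (Js n)) ∧
  (∀ m n, m ≠ n → Disjoint (Is m) (Is n) ∧ Disjoint (Js m) (Js n)) ∧
  (∀ i, ∃ n, i ∈ Is n) ∧ (∀ j, ∃ n, j ∈ Js n)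

/-!
On the open block `(p_{i-1}, p_i)` every `F_{i'}` with `i' ≠ i` is constant (`0` or `1`) and `F_i`
inverts the affine map `F̃_i`. Feed the patching relation for `𝟙_{S'}` with `φ_j = 𝟙_S` for
`j ∈ J₀` and `φ_j = 0` otherwise: invariance of `(I₀, J₀)` collapses `Σ_j (a_{ij}/Δp_i) Tφ_j` to
`𝟙_R` for `i ∈ I₀` and to `0` otherwise, so on the block `T'𝟙_{S'} = 𝟙_{F̃_i(R)} + c_i`, where
`c_i` collects the values at the points `0, 1` of the chosen representatives of `T𝟙_S = 𝟙_R`.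

Point values of elements of `L¹` are not determined, so `c_i = 0` has to be proved. Patching `0`
and `𝟙` (fixed by `T` and `T'`) forces the representatives of `0` and `𝟙` to vanish at every
endpoint that occurs; this settles null and conull `R`. Otherwise `0 ≤ T'𝟙_{S'} ≤ 1` on the parts
of the block where `F_i` lands in `R` resp. `Rᶜ` gives `c_i = 0` for `i ∈ I₀`. For `i ∉ I₀` the
bound `c_i ≥ 0` is matched by `c_i ≤ 0`, read off from `S'' = S' ∪ ⋃_{j ∉ J₀} G̃_j([0,1])`, whose
patched indicator is at most `1` and equals `1 + c_i` on the block.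
-/

namespace MarkovPatching

local notation "L¹" => Lp ℝ 1 (volume : Measure I)

structure IsPartition (p : ℕ → ℝ) (k : ℕ) : Prop where
  mono : Monotone p
  zero : p 0 = 0
  last : p k = 1
  lt_succ : ∀ i < k, p i < p (i + 1)

def block (p : ℕ → ℝ) (i : ℕ) : Set I := Subtype.val ⁻¹' Ioo (p i) (p (i + 1))

def blockEmbed (p : ℕ → ℝ) (i : ℕ) (y : I) : I := toI (p i + y * (p (i + 1) - p i))

def blockCoord (p : ℕ → ℝ) (i : ℕ) (x : I) : I := toI ((x - p i) / (p (i + 1) - p i))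

lemma coe_toI {x : ℝ} (hx : x ∈ Icc 0 1) : (toI x : ℝ) = x := by
  simp only [toI, max_eq_right hx.1, min_eq_right hx.2]

lemma toI_zero : toI 0 = 0 := Subtype.ext (coe_toI unitInterval.zero_mem)

lemma toI_one : toI 1 = 1 := Subtype.ext (coe_toI unitInterval.one_mem)

lemma ae_mem_Ioo : ∀ᵐ y : I, y ∈ Ioo 0 1 := by
  rw [ae_iff]
  refine measure_mono_null (t := Iic 0 ∪ Ici 1) (fun y hy => ?_) (measure_union_null ?_ ?_)
  · simp only [mem_ofPred_eq, mem_Ioo, not_and_or, not_lt] at hy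
    exact hy
  · simp
  · simp

lemma volume_image_affine (c : ℝ) {d : ℝ} (hd : d ≠ 0) (s : Set ℝ) :
    volume ((fun t => c + t * d) '' s) = ENNReal.ofReal |d| * volume s := by
  have hleft : Function.LeftInverse (fun y => (y - c) / d) (fun t => c + t * d) := fun t => by
    field_simp
    ring
  have hright : Function.RightInverse (fun y => (y - c) / d) (fun t => c + t * d) := fun y => by
    field_simp
    ring
  rw [image_eq_preimage_of_inverse hleft hright,
    show (fun y => (y - c) / d) = (fun z => z * d⁻¹) ∘ (fun y => -c + y) from
      funext fun y => by simp only [Function.comp, div_eq_mul_inv]; ring,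
    preimage_comp, measure_preimage_add, Real.volume_preimage_mul_right (inv_ne_zero hd),
    inv_inv]

lemma ind_coeFn {S : Set I} (hS : MeasurableSet S) :
    ⇑(ind S) =ᵐ[volume] S.indicator fun _ => (1 : ℝ) := by
  rw [ind, dif_pos hS]
  exact indicatorConstLp_coeFn

lemma ind_empty : ind (∅ : Set I) = 0 := by
  rw [ind, dif_pos MeasurableSet.empty]
  exact indicatorConstLp_empty

lemma ind_univ_coeFn : ⇑(ind (univ : Set I)) =ᵐ[volume] fun _ => (1 : ℝ) := by
  simpa only [indicator_univ] using ind_coeFn MeasurableSet.univ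

lemma ind_congr {S S' : Set I} (hS : MeasurableSet S) (hS' : MeasurableSet S')
    (h : S =ᵐ[volume] S') : ind S = ind S' :=
  Lp.ext ((ind_coeFn hS).trans ((indicator_ae_eq_of_ae_eq_set h).trans (ind_coeFn hS').symm))

lemma ind_nonneg {S : Set I} (hS : MeasurableSet S) : 0 ≤ᵐ[volume] ⇑(ind S) := by
  filter_upwards [ind_coeFn hS] with x hx
  rw [hx]
  exact indicator_nonneg (fun _ _ => zero_le_one) x

lemma ind_le_one {S : Set I} (hS : MeasurableSet S) :
    ⇑(ind S) ≤ᵐ[volume] fun _ => (1 : ℝ) := by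
  filter_upwards [ind_coeFn hS] with x hx
  rw [hx]
  exact indicator_le_self' (fun _ _ => zero_le_one) x

lemma _root_.IsMarkovOperator.ae_le_one {T : L¹ →L[ℝ] L¹} (hT : IsMarkovOperator T) {ψ : L¹}
    (hψ : ⇑ψ ≤ᵐ[volume] fun _ => (1 : ℝ)) : ⇑(T ψ) ≤ᵐ[volume] fun _ => (1 : ℝ) := by
  have hpos := hT.positive (ind univ - ψ) <| by
    filter_upwards [Lp.coeFn_sub (ind univ) ψ, ind_univ_coeFn, hψ] with x hsub h1 hx
    rw [Pi.zero_apply, hsub, Pi.sub_apply, h1]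
    linarith
  rw [map_sub, hT.map_one] at hpos
  filter_upwards [hpos, Lp.coeFn_sub (ind univ) (T ψ), ind_univ_coeFn] with x hx hsub h1
  rw [Pi.zero_apply, hsub, Pi.sub_apply, h1] at hx
  linarith

namespace IsPartition

variable {p : ℕ → ℝ} {k : ℕ} (hp : IsPartition p k)
include hp

lemma nonneg (m : ℕ) : 0 ≤ p m := hp.zero ▸ hp.mono m.zero_le

lemma le_one {m : ℕ} (hm : m ≤ k) : p m ≤ 1 := hp.last ▸ hp.mono hm

lemma sub_pos {i : ℕ} (hi : i < k) : 0 < p (i + 1) - p i := _root_.sub_pos.2 (hp.lt_succ i hi)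

lemma coe_blockEmbed {i : ℕ} (hi : i < k) (y : I) :
    (blockEmbed p i y : ℝ) = p i + y * (p (i + 1) - p i) := by
  have := hp.nonneg i
  have := hp.le_one hi
  have := hp.sub_pos hi
  have := y.2.1
  have := y.2.2
  exact coe_toI ⟨by nlinarith, by nlinarith⟩

lemma blockEmbed_injective {i : ℕ} (hi : i < k) : Function.Injective (blockEmbed p i) :=
  fun y y' h => Subtype.ext <| by
    have := congrArg Subtype.val h
    rw [hp.coe_blockEmbed hi, hp.coe_blockEmbed hi] at this
    nlinarith [hp.sub_pos hi]

lemma measurableSet_image_blockEmbed {i : ℕ} (hi : i < k) {B : Set I} (hB : MeasurableSet B) :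
    MeasurableSet (blockEmbed p i '' B) :=
  ((Continuous.isClosedEmbedding (by unfold blockEmbed toI; fun_prop)
    (hp.blockEmbed_injective hi)).measurableEmbedding).measurableSet_image' hB

lemma coe_blockCoord {i : ℕ} (hi : i < k) {x : I} (hx : x ∈ block p i) :
    (blockCoord p i x : ℝ) = (x - p i) / (p (i + 1) - p i) := by
  have hd := hp.sub_pos hi
  obtain ⟨h1, h2⟩ := hx
  exact coe_toI ⟨div_nonneg (by linarith) hd.le, (div_le_one hd).2 (by linarith)⟩

lemma blockCoord_mem_Ioo {i : ℕ} (hi : i < k) {x : I} (hx : x ∈ block p i) :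
    blockCoord p i x ∈ Ioo 0 1 := by
  have hd := hp.sub_pos hi
  have hc := hp.coe_blockCoord hi hx
  obtain ⟨h1, h2⟩ := hx
  refine ⟨show (0 : ℝ) < _ from ?_, show _ < (1 : ℝ) from ?_⟩ <;> rw [hc]
  · exact div_pos (by linarith) hd
  · exact (div_lt_one hd).2 (by linarith)

lemma blockEmbed_blockCoord {i : ℕ} (hi : i < k) {x : I} (hx : x ∈ block p i) :
    blockEmbed p i (blockCoord p i x) = x := by
  ext
  rw [hp.coe_blockEmbed hi, hp.coe_blockCoord hi hx]
  field_simp [(hp.sub_pos hi).ne']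
  ring

lemma blockEmbed_mem_block {i : ℕ} (hi : i < k) {y : I} (hy : y ∈ Ioo 0 1) :
    blockEmbed p i y ∈ block p i := by
  have hd := hp.sub_pos hi
  have h0 : (0 : ℝ) < y := hy.1
  have h1 : (y : ℝ) < 1 := hy.2
  simp only [block, mem_preimage, mem_Ioo, hp.coe_blockEmbed hi]
  constructor <;> nlinarith

lemma blockCoord_blockEmbed {i : ℕ} (hi : i < k) {y : I} (hy : y ∈ Ioo 0 1) :
    blockCoord p i (blockEmbed p i y) = y :=
  hp.blockEmbed_injective hi (hp.blockEmbed_blockCoord hi (hp.blockEmbed_mem_block hi hy))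

lemma mem_image_blockEmbed_iff {i i' : ℕ} (hi : i < k) (hi' : i' < k) {x : I}
    (hx : x ∈ block p i) {B : Set I} :
    x ∈ blockEmbed p i' '' B ↔ i' = i ∧ blockCoord p i x ∈ B := by
  refine ⟨fun ⟨y, hyB, hyx⟩ => ?_,
    fun ⟨hii', hxB⟩ => ⟨_, hxB, hii' ▸ hp.blockEmbed_blockCoord hi hx⟩⟩
  obtain ⟨h1, h2⟩ := hx
  have hv := congrArg Subtype.val hyx
  rw [hp.coe_blockEmbed hi'] at hv
  have := y.2.1
  have := y.2.2
  have := hp.sub_pos hi'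
  have hii' : i' = i := by
    by_contra hne
    rcases Nat.lt_or_gt_of_ne hne with h | h
    · nlinarith [hp.mono (Nat.succ_le_of_lt h)]
    · nlinarith [hp.mono (Nat.succ_le_of_lt h)]
  subst hii'
  have hy : y ∈ Ioo 0 1 := ⟨show (0 : ℝ) < y by nlinarith, show (y : ℝ) < 1 by nlinarith⟩
  exact ⟨rfl, by rwa [← hyx, hp.blockCoord_blockEmbed hi' hy]⟩

lemma mem_biUnion_image_blockEmbed_iff {i : Fin k} {x : I} (hx : x ∈ block p i)
    (I₀ : Finset (Fin k)) (B : Set I) :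
    x ∈ ⋃ i' ∈ I₀, blockEmbed p i' '' B ↔ i ∈ I₀ ∧ blockCoord p i x ∈ B := by
  simp only [mem_iUnion, exists_prop, hp.mem_image_blockEmbed_iff i.2 (Fin.is_lt _) hx,
    Fin.val_inj]
  constructor
  · rintro ⟨i', hi', rfl, hxB⟩
    exact ⟨hi', hxB⟩
  · rintro ⟨hi, hxB⟩
    exact ⟨i, hi, rfl, hxB⟩

lemma blockEmbed_mem_iUnion_image_iff {j : Fin k} {y : I} (hy : y ∈ Ioo 0 1)
    (B : Fin k → Set I) : blockEmbed p j y ∈ ⋃ j' : Fin k, blockEmbed p j' '' B j' ↔ y ∈ B j := by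
  simp only [mem_iUnion, hp.mem_image_blockEmbed_iff j.2 (Fin.is_lt _)
    (hp.blockEmbed_mem_block j.2 hy), hp.blockCoord_blockEmbed j.2 hy, Fin.val_inj]
  constructor
  · rintro ⟨j', rfl, hyB⟩
    exact hyB
  · exact fun hyB => ⟨j, rfl, hyB⟩

lemma volume_image_blockEmbed {i : ℕ} (hi : i < k) (A : Set I) :
    volume (blockEmbed p i '' A) = ENNReal.ofReal (p (i + 1) - p i) * volume A := by
  have hd := hp.sub_pos hi
  have himage : Subtype.val '' (blockEmbed p i '' A)
      = (fun t => p i + t * (p (i + 1) - p i)) '' (Subtype.val '' A) := by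
    rw [image_image, image_image]
    exact image_congr fun y _ => hp.coe_blockEmbed hi y
  rw [unitInterval.volume_apply, unitInterval.volume_apply, himage,
    volume_image_affine _ hd.ne', abs_of_pos hd]

lemma setOf_mem_block_blockCoord_mem {i : ℕ} (hi : i < k) (A : Set I) :
    {x | x ∈ block p i ∧ blockCoord p i x ∈ A} = blockEmbed p i '' (A ∩ Ioo 0 1) := by
  ext x
  constructor
  · rintro ⟨hx, hxA⟩
    exact ⟨_, ⟨hxA, hp.blockCoord_mem_Ioo hi hx⟩, hp.blockEmbed_blockCoord hi hx⟩
  · rintro ⟨y, ⟨hyA, hy⟩, rfl⟩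
    exact ⟨hp.blockEmbed_mem_block hi hy, by rwa [hp.blockCoord_blockEmbed hi hy]⟩

lemma volume_setOf_mem_block_blockCoord_mem {i : ℕ} (hi : i < k) (A : Set I) :
    volume {x | x ∈ block p i ∧ blockCoord p i x ∈ A}
      = ENNReal.ofReal (p (i + 1) - p i) * volume A := by
  rw [hp.setOf_mem_block_blockCoord_mem hi, hp.volume_image_blockEmbed hi,
    measure_inter_conull (t := Ioo 0 1) (mem_ae_iff.1 ae_mem_Ioo)]

lemma ae_comp_blockEmbed {β : Type*} {f g : I → β} {i : ℕ} (hi : i < k)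
    (hfg : f =ᵐ[volume] g) :
    (fun y => f (blockEmbed p i y)) =ᵐ[volume] fun y => g (blockEmbed p i y) := by
  have hnull : ENNReal.ofReal (p (i + 1) - p i)
      * volume (blockEmbed p i ⁻¹' {x | f x ≠ g x}) = 0 := by
    rw [← hp.volume_image_blockEmbed hi]
    exact measure_mono_null (image_preimage_subset _ _) (ae_iff.1 hfg)
  exact ae_iff.2 ((mul_eq_zero.1 hnull).resolve_left (ENNReal.ofReal_pos.2 (hp.sub_pos hi)).ne')

lemma ae_comp_blockCoord {β : Type*} {f g : I → β} {i : ℕ} (hi : i < k)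
    (hfg : f =ᵐ[volume] g) :
    ∀ᵐ x, x ∈ block p i → f (blockCoord p i x) = g (blockCoord p i x) := by
  have hnull : volume {x | x ∈ block p i ∧ blockCoord p i x ∈ {y | f y ≠ g y}} = 0 := by
    rw [hp.volume_setOf_mem_block_blockCoord_mem hi, ae_iff.1 hfg, mul_zero]
  exact ae_iff.2 (measure_mono_null (fun x hx => Classical.not_imp.1 hx) hnull)

lemma exists_mem_block_blockCoord_mem_of_ae {i : ℕ} (hi : i < k) {A : Set I}
    (hA : volume A ≠ 0) {Q : I → Prop} (hQ : ∀ᵐ x, Q x) :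
    ∃ x ∈ block p i, blockCoord p i x ∈ A ∧ Q x := by
  have hpos : volume {x | x ∈ block p i ∧ blockCoord p i x ∈ A} ≠ 0 := by
    rw [hp.volume_setOf_mem_block_blockCoord_mem hi]
    exact mul_ne_zero (ENNReal.ofReal_pos.2 (hp.sub_pos hi)).ne' hA
  by_contra! hc
  refine hpos (measure_mono_null ?_ (ae_iff.1 hQ))
  exact fun x ⟨hx, hxA⟩ hQx => hc x hx hxA hQx

lemma exists_mem_block_of_forall_ne {x : I} (hx : ∀ m, (x : ℝ) ≠ p m) :
    ∃ i : Fin k, x ∈ block p i := by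
  classical
  have hk : k ≠ 0 := fun hk => by simpa [hk, hp.zero] using hp.last
  have hxk : (x : ℝ) < p (k - 1 + 1) := by
    rw [Nat.sub_add_cancel (Nat.one_le_iff_ne_zero.2 hk), hp.last]
    exact lt_of_le_of_ne x.2.2 (hp.last ▸ hx k)
  have hlt : ∃ m, (x : ℝ) < p (m + 1) := ⟨k - 1, hxk⟩
  refine ⟨⟨Nat.find hlt, by have := Nat.find_min' hlt hxk; omega⟩, ?_, Nat.find_spec hlt⟩
  show p (Nat.find hlt) < x
  refine lt_of_le_of_ne ?_ (hx _).symm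
  rcases hm : Nat.find hlt with _ | m
  · rw [hp.zero]
    exact x.2.1
  · exact not_lt.1 (Nat.find_min hlt (hm ▸ m.lt_succ_self))

lemma ae_exists_mem_block : ∀ᵐ x : I, ∃ i : Fin k, x ∈ block p i := by
  filter_upwards [((countable_range p).preimage Subtype.val_injective).ae_notMem volume] with x hx
  exact hp.exists_mem_block_of_forall_ne fun m hm => hx ⟨m, hm.symm⟩

lemma eq_zero_of_ae_eq_indicator_blockCoord_add {i : ℕ} (hi : i < k) {R : Set I}
    (hR : volume R ≠ 0) (hRc : volume Rᶜ ≠ 0) {f g : I → ℝ} (hf0 : 0 ≤ᵐ[volume] f)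
    (hf1 : f ≤ᵐ[volume] fun _ => 1) (hg1 : g ≤ᵐ[volume] fun _ => 1) {P : Prop} [Decidable P]
    {c : ℝ}
    (hf : ∀ᵐ x, x ∈ block p i →
      f x = (if P then R else ∅).indicator (fun _ => 1) (blockCoord p i x) + c)
    (hg : ∀ᵐ x, x ∈ block p i →
      g x = (if P then R else univ).indicator (fun _ => 1) (blockCoord p i x) + c) :
    c = 0 := by
  by_cases hP : P
  · simp only [if_pos hP] at hf
    obtain ⟨x, hxi, hxR, hx, hx1⟩ := hp.exists_mem_block_blockCoord_mem_of_ae hi hR (hf.and hf1)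
    obtain ⟨y, hyi, hyR, hy, hy0⟩ := hp.exists_mem_block_blockCoord_mem_of_ae hi hRc (hf.and hf0)
    have hfx := hx hxi
    have hfy := hy hyi
    rw [indicator_of_mem hxR] at hfx
    rw [indicator_of_notMem hyR] at hfy
    simp only [Pi.zero_apply] at hx1 hy0
    linarith
  · simp only [if_neg hP, indicator_empty, indicator_univ] at hf hg
    obtain ⟨x, hxi, -, hx, hx0⟩ :=
      hp.exists_mem_block_blockCoord_mem_of_ae hi (A := univ) (by simp) (hf.and hf0)
    obtain ⟨y, hyi, -, hy, hy1⟩ :=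
      hp.exists_mem_block_blockCoord_mem_of_ae hi (A := univ) (by simp) (hg.and hg1)
    have hfx := hx hxi
    have hgy := hy hyi
    simp only [Pi.zero_apply] at hx0 hy1 hfx
    linarith

lemma ind_ae_eq_ind_iUnion_image_comp {B : Fin k → Set I} (hB : ∀ j, MeasurableSet (B j))
    (j : Fin k) :
    ⇑(ind (B j)) =ᵐ[volume]
      fun y => ind (⋃ j' : Fin k, blockEmbed p j' '' B j') (blockEmbed p j y) := by
  classical
  have hU := MeasurableSet.iUnion fun j' : Fin k => hp.measurableSet_image_blockEmbed j'.2 (hB j')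
  filter_upwards [ind_coeFn (hB j), hp.ae_comp_blockEmbed j.2 (ind_coeFn hU), ae_mem_Ioo]
    with y hy hUy hy01
  simp only [hy, hUy, Set.indicator_apply, hp.blockEmbed_mem_iUnion_image_iff hy01]

end IsPartition

variable {k ℓ : ℕ} {a : Fin k → Fin ℓ → ℝ}

lemma pP_succ_sub (i : Fin k) : pP a (i + 1) - pP a i = ∑ j, a i j := by
  have hterm : ∀ i' : Fin k, ((if (i' : ℕ) < i + 1 then ∑ j, a i' j else 0)
      - if (i' : ℕ) < i then ∑ j, a i' j else 0) = if i' = i then ∑ j, a i' j else 0 := by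
    intro i'
    split_ifs <;> simp_all [Fin.ext_iff] <;> omega
  rw [pP, pP, ← Finset.sum_sub_distrib, Finset.sum_congr rfl fun i' _ => hterm i',
    Finset.sum_ite_eq' Finset.univ i, if_pos (Finset.mem_univ i)]

lemma isPartition_pP (ha : IsTransfMatrix a) : IsPartition (pP a) k where
  mono m n hmn := Finset.sum_le_sum fun i _ => by
    split_ifs
    · exact le_rfl
    · omega
    · exact Finset.sum_nonneg fun j _ => ha.1 i j
    · exact le_rfl
  zero := by simp [pP]
  last := by
    rw [← ha.2.1]
    exact Finset.sum_congr rfl fun i _ => if_pos i.2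
  lt_succ i hi := by
    obtain ⟨j, hj⟩ := ha.2.2.2 ⟨i, hi⟩
    have hrow : 0 < ∑ j, a ⟨i, hi⟩ j :=
      Finset.sum_pos' (fun j _ => ha.1 _ j) ⟨j, Finset.mem_univ _, (ha.1 _ j).lt_of_ne' hj⟩
    linarith [pP_succ_sub (a := a) ⟨i, hi⟩]

lemma isTransfMatrix_swap (ha : IsTransfMatrix a) : IsTransfMatrix (Function.swap a) :=
  ⟨fun j i => ha.1 i j, by rw [Finset.sum_comm]; exact ha.2.1, ha.2.2.2, ha.2.2.1⟩

lemma isPartition_qQ (ha : IsTransfMatrix a) : IsPartition (qQ a) ℓ :=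
  isPartition_pP (isTransfMatrix_swap ha)

lemma Gtilde_eq_blockEmbed (j : Fin ℓ) : Gtilde a j = blockEmbed (qQ a) j := rfl

lemma Ftilde_eq_blockEmbed (i : Fin k) : Ftilde a i = blockEmbed (pP a) i := rfl

lemma measurableSet_iUnion_image_Gtilde (ha : IsTransfMatrix a) {B : Fin ℓ → Set I}
    (hB : ∀ j, MeasurableSet (B j)) : MeasurableSet (⋃ j, Gtilde a j '' B j) :=
  MeasurableSet.iUnion fun j => (isPartition_qQ ha).measurableSet_image_blockEmbed j.2 (hB j)

lemma sum_div_pP_sub (ha : IsTransfMatrix a) (i : Fin k) :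
    ∑ j, a i j / (pP a (i + 1) - pP a i) = 1 := by
  rw [← Finset.sum_div, ← pP_succ_sub, div_self ((isPartition_pP ha).sub_pos i.2).ne']

variable {I₀ : Finset (Fin k)} {J₀ : Finset (Fin ℓ)}

lemma sum_div_pP_sub_mul_ite (ha : IsTransfMatrix a)
    (hinv : ∀ i j, ((i ∈ I₀ ∧ j ∉ J₀) ∨ (i ∉ I₀ ∧ j ∈ J₀)) → a i j = 0) (i : Fin k)
    (b b' : ℝ) :
    ∑ j, a i j / (pP a (i + 1) - pP a i) * (if j ∈ J₀ then b else b')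
      = if i ∈ I₀ then b else b' := by
  have hterm : ∀ j, a i j / (pP a (i + 1) - pP a i) * (if j ∈ J₀ then b else b')
      = a i j / (pP a (i + 1) - pP a i) * (if i ∈ I₀ then b else b') := by
    intro j
    by_cases hi : i ∈ I₀ <;> by_cases hj : j ∈ J₀ <;> simp [hi, hj, hinv i j]
  rw [Finset.sum_congr rfl fun j _ => hterm j, ← Finset.sum_mul, sum_div_pP_sub ha, one_mul]

def endPt (i i' : Fin k) : I := if i < i' then 0 else 1

lemma FdistI_of_mem_block (hp : IsPartition (pP a) k) {i : Fin k} {x : I}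
    (hx : x ∈ block (pP a) i) : FdistI a i x = blockCoord (pP a) i x := by
  obtain ⟨h1, h2⟩ := hx
  unfold FdistI blockCoord
  rw [if_pos h1, min_eq_right ((div_le_one (hp.sub_pos i.2)).2 (by linarith))]

lemma FdistI_of_mem_block_of_ne (hp : IsPartition (pP a) k) {i i' : Fin k} {x : I}
    (hx : x ∈ block (pP a) i) (hne : i' ≠ i) : FdistI a i' x = endPt i i' := by
  obtain ⟨h1, h2⟩ := hx
  unfold FdistI endPt
  rcases lt_or_gt_of_ne hne with h | h
  · have hle : pP a (i' + 1) ≤ pP a i := hp.mono (Nat.succ_le_of_lt h)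
    have hle' : pP a i' ≤ pP a (i' + 1) := hp.mono (Nat.le_succ _)
    rw [if_pos (by linarith), if_neg (lt_asymm h),
      min_eq_left ((le_div_iff₀ (hp.sub_pos i'.2)).2 (by linarith)), toI_one]
  · have hle : pP a (i + 1) ≤ pP a i' := hp.mono (Nat.succ_le_of_lt h)
    rw [if_neg (by linarith), if_pos h, toI_zero]

lemma apply_endPt_eq_zero_of_sum_eq_zero {g : I → ℝ}
    (h : ∀ i : Fin k, ∑ i' ∈ Finset.univ.erase i, g (endPt i i') = 0) {i i' : Fin k}
    (hne : i' ≠ i) : g (endPt i i') = 0 := by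
  have hk : 2 ≤ k := by
    have := Fin.val_ne_of_ne hne
    omega
  have hconst : ∀ (i₀ : Fin k) (e : I), (∀ i' ≠ i₀, endPt i₀ i' = e) → g e = 0 := by
    intro i₀ e he
    have hsum := h i₀
    rw [Finset.sum_congr rfl fun i' hi' => by rw [he i' (Finset.ne_of_mem_erase hi')],
      Finset.sum_const, Finset.card_erase_of_mem (Finset.mem_univ _), Finset.card_univ,
      Fintype.card_fin, nsmul_eq_mul] at hsum
    exact (mul_eq_zero.1 hsum).resolve_left (by norm_cast; omega)
  have h0 : g 0 = 0 := hconst ⟨0, by omega⟩ 0 fun i' hi' => if_pos <| Fin.lt_def.2 <| by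
    have := Fin.val_ne_of_ne hi'
    dsimp at this ⊢
    omega
  have h1 : g 1 = 0 := hconst ⟨k - 1, by omega⟩ 1 fun i' hi' => if_neg <| by
    rw [Fin.lt_def]
    dsimp
    omega
  unfold endPt
  split_ifs
  exacts [h0, h1]

variable {T T' : L¹ →L[ℝ] L¹}

/-- The values `T (φ j) (endPt i i')` depend on which representative of the class `T (φ j)` the
coercion `Lp → (I → ℝ)` picks. -/
lemma patching_ae_eq_on_block (ha : IsTransfMatrix a) (hpatch : IsAPatching a T' T)
    {ψ : L¹} {φ : Fin ℓ → L¹} (hφ : ∀ j, ⇑(φ j) =ᵐ[volume] fun x => ψ (Gtilde a j x))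
    (i : Fin k) :
    ∀ᵐ x, x ∈ block (pP a) i → T' ψ x =
      ∑ j, a i j / (pP a (i + 1) - pP a i) * T (φ j) (blockCoord (pP a) i x)
      + ∑ i' ∈ Finset.univ.erase i,
          ∑ j, a i' j / (pP a (i' + 1) - pP a i') * T (φ j) (endPt i i') := by
  have hp := isPartition_pP ha
  filter_upwards [hpatch ψ φ hφ] with x hx hxi
  rw [hx, ← Finset.add_sum_erase _ _ (Finset.mem_univ i), FdistI_of_mem_block hp hxi]
  congr 1
  refine Finset.sum_congr rfl fun i' hi' => ?_
  rw [FdistI_of_mem_block_of_ne hp hxi (Finset.ne_of_mem_erase hi')]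

lemma apply_endPt_eq_zero_of_fixed (ha : IsTransfMatrix a) (hpatch : IsAPatching a T' T)
    {f : L¹} {c : ℝ} (hf : ⇑f =ᵐ[volume] fun _ => c) (hTf : T f = f) (hT'f : T' f = f)
    {i i' : Fin k} (hne : i' ≠ i) : f (endPt i i') = 0 := by
  have hp := isPartition_pP ha
  refine apply_endPt_eq_zero_of_sum_eq_zero (fun i => ?_) hne
  have hφ : ∀ j : Fin ℓ, ⇑f =ᵐ[volume] fun x => f (Gtilde a j x) :=
    fun j => hf.trans ((isPartition_qQ ha).ae_comp_blockEmbed j.2 hf).symm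
  obtain ⟨x, hxi, -, hx, hfx, hfcx⟩ :=
    hp.exists_mem_block_blockCoord_mem_of_ae i.2 (A := univ) (by simp)
      ((patching_ae_eq_on_block ha hpatch (φ := fun _ => f) hφ i).and
        (hf.and (hp.ae_comp_blockCoord i.2 hf)))
  have hsum := hx hxi
  simp only [hT'f, hTf, hfx, hfcx hxi, ← Finset.sum_mul, sum_div_pP_sub ha, one_mul] at hsum
  linarith

lemma ind_empty_apply_endPt (ha : IsTransfMatrix a) (hpatch : IsAPatching a T' T)
    {i i' : Fin k} (hne : i' ≠ i) : ind ∅ (endPt i i') = 0 :=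
  apply_endPt_eq_zero_of_fixed ha hpatch (c := 0) (by rw [ind_empty]; exact Lp.coeFn_zero ..)
    (by rw [ind_empty, map_zero]) (by rw [ind_empty, map_zero]) hne

lemma ind_univ_apply_endPt (ha : IsTransfMatrix a) (hT : IsMarkovOperator T)
    (hT' : IsMarkovOperator T') (hpatch : IsAPatching a T' T) {i i' : Fin k} (hne : i' ≠ i) :
    ind univ (endPt i i') = 0 :=
  apply_endPt_eq_zero_of_fixed ha hpatch ind_univ_coeFn hT.map_one hT'.map_one hne

lemma patching_ind_ae_eq_on_block (ha : IsTransfMatrix a) (hpatch : IsAPatching a T' T)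
    (hinv : ∀ i j, ((i ∈ I₀ ∧ j ∉ J₀) ∨ (i ∉ I₀ ∧ j ∈ J₀)) → a i j = 0)
    {Sa Sb Wa Wb : Set I} (hSa : MeasurableSet Sa) (hSb : MeasurableSet Sb)
    (hWa : MeasurableSet Wa) (hWb : MeasurableSet Wb)
    (hTa : T (ind Sa) = ind Wa) (hTb : T (ind Sb) = ind Wb)
    (hWb_endPt : ∀ i i' : Fin k, i' ≠ i → ind Wb (endPt i i') = 0) (i : Fin k) :
    ∀ᵐ x, x ∈ block (pP a) i →
      T' (ind (⋃ j, Gtilde a j '' if j ∈ J₀ then Sa else Sb)) x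
        = (if i ∈ I₀ then Wa else Wb).indicator (fun _ => 1) (blockCoord (pP a) i x)
          + ∑ i' ∈ I₀.erase i, ind Wa (endPt i i') := by
  have hp := isPartition_pP ha
  have hφ := (isPartition_qQ ha).ind_ae_eq_ind_iUnion_image_comp
    (B := fun j => if j ∈ J₀ then Sa else Sb) fun j => by split_ifs <;> assumption
  have hTφ : ∀ j y, T (ind (if j ∈ J₀ then Sa else Sb)) y
      = if j ∈ J₀ then ind Wa y else ind Wb y := fun j y => by
    split_ifs <;> simp only [hTa, hTb]
  filter_upwards [patching_ae_eq_on_block ha hpatch hφ i,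
    hp.ae_comp_blockCoord i.2 (ind_coeFn hWa), hp.ae_comp_blockCoord i.2 (ind_coeFn hWb)]
    with x hx hxa hxb hxi
  simp only [Gtilde_eq_blockEmbed]
  rw [hx hxi]
  simp only [hTφ, sum_div_pP_sub_mul_ite ha hinv]
  congr 1
  · split_ifs
    exacts [hxa hxi, hxb hxi]
  · rw [show I₀.erase i = Finset.univ.erase i ∩ I₀ by
        rw [Finset.erase_inter, Finset.univ_inter],
      ← Finset.sum_ite_mem]
    refine Finset.sum_congr rfl fun i' hi' => ?_
    rw [hWb_endPt i i' (Finset.ne_of_mem_erase hi')]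

lemma sum_ind_apply_endPt_eq_zero (ha : IsTransfMatrix a) (hT : IsMarkovOperator T)
    (hT' : IsMarkovOperator T') (hpatch : IsAPatching a T' T)
    (hinv : ∀ i j, ((i ∈ I₀ ∧ j ∉ J₀) ∨ (i ∉ I₀ ∧ j ∈ J₀)) → a i j = 0)
    {S R : Set I} (hS : MeasurableSet S) (hR : MeasurableSet R) (h : T (ind S) = ind R)
    (i : Fin k) : ∑ i' ∈ I₀.erase i, ind R (endPt i i') = 0 := by
  rcases eq_or_ne (volume R) 0 with hR0 | hR0
  · rw [ind_congr hR .empty (ae_eq_empty.2 hR0)]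
    exact Finset.sum_eq_zero fun i' hi' =>
      ind_empty_apply_endPt ha hpatch (Finset.ne_of_mem_erase hi')
  rcases eq_or_ne (volume Rᶜ) 0 with hRc | hRc
  · rw [ind_congr hR .univ (ae_eq_univ.2 hRc)]
    exact Finset.sum_eq_zero fun i' hi' =>
      ind_univ_apply_endPt ha hT hT' hpatch (Finset.ne_of_mem_erase hi')
  have hmeas : ∀ {B : Set I}, MeasurableSet B →
      MeasurableSet (⋃ j, Gtilde a j '' if j ∈ J₀ then S else B) := fun hB =>
    measurableSet_iUnion_image_Gtilde ha fun j => by split_ifs <;> assumption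
  exact (isPartition_pP ha).eq_zero_of_ae_eq_indicator_blockCoord_add i.2 hR0 hRc
    (hT'.positive _ (ind_nonneg (hmeas .empty))) (hT'.ae_le_one (ind_le_one (hmeas .empty)))
    (hT'.ae_le_one (ind_le_one (hmeas .univ)))
    (patching_ind_ae_eq_on_block ha hpatch hinv hS .empty hR .empty h
      (by rw [ind_empty, map_zero]) (fun _ _ => ind_empty_apply_endPt ha hpatch) i)
    (patching_ind_ae_eq_on_block ha hpatch hinv hS .univ hR .univ h hT.map_one
      (fun _ _ => ind_univ_apply_endPt ha hT hT' hpatch) i)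

end MarkovPatching

open MarkovPatching in
/-- Let `A = [a_{ij}]` be a `k × ℓ` transformation matrix, `T, T'` Markov
operators on `L¹([0,1], λ)` with `T'` the `A`-patching of `T`, and `(I₀, J₀)` an invariant
pair of `A`.  If `S, R ⊆ [0,1]` are Borel sets with `T𝟙_S = 𝟙_R` λ-a.e., then
`T'𝟙_{S′} = 𝟙_{R′}` λ-a.e., where `S′ = ⋃_{j∈J₀} (q_{j−1} + Δq_j·S)` and
`R′ = ⋃_{i∈I₀} (p_{i−1} + Δp_i·R)` (the affine images under `G̃_j` resp. `F̃_i`). -/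
theorem stmt14 {k ℓ : ℕ} (a : Fin k → Fin ℓ → ℝ) (ha : IsTransfMatrix a)
    (T T' : Lp ℝ 1 (volume : Measure I) →L[ℝ] Lp ℝ 1 (volume : Measure I))
    (hT : IsMarkovOperator T) (hT' : IsMarkovOperator T')
    (hpatch : IsAPatching a T' T)
    (I₀ : Finset (Fin k)) (J₀ : Finset (Fin ℓ)) (hIJ : IsInvariantPair a I₀ J₀)
    (S R : Set I) (hS : MeasurableSet S) (hR : MeasurableSet R)
    (h : T (ind S) = ind R) :
    T' (ind (⋃ j ∈ J₀, Gtilde a j '' S)) = ind (⋃ i ∈ I₀, Ftilde a i '' R) := by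
  obtain ⟨-, -, hinv, -⟩ := hIJ
  have hp := isPartition_pP ha
  have hψ := patching_ind_ae_eq_on_block ha hpatch hinv hS .empty hR .empty h
    (by rw [ind_empty, map_zero]) (fun _ _ => ind_empty_apply_endPt ha hpatch)
  have hS' : ⋃ j ∈ J₀, Gtilde a j '' S = ⋃ j, Gtilde a j '' if j ∈ J₀ then S else ∅ := by
    ext x
    simp [apply_ite]
  have hR' : MeasurableSet (⋃ i ∈ I₀, Ftilde a i '' R) :=
    Finset.measurableSet_biUnion I₀ fun i _ => hp.measurableSet_image_blockEmbed i.2 hR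
  rw [hS']
  refine Lp.ext ?_
  filter_upwards [hp.ae_exists_mem_block, ae_all_iff.2 hψ, ind_coeFn hR']
    with x ⟨i, hxi⟩ hx hR'x
  rw [hx i hxi, sum_ind_apply_endPt_eq_zero ha hT hT' hpatch hinv hS hR h i, add_zero, hR'x]
  classical
  simp only [Ftilde_eq_blockEmbed, Set.indicator_apply, hp.mem_biUnion_image_blockEmbed_iff hxi]
  split_ifs <;> simp_all
end
end
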